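/- arXiv:1402.2137 — 4 statements merged into one kernel-verified Lean document; each statement's English description precedes it below -/
import Mathlib

section
/- Let D be an Euler directed multigraph and let F be a feedback arc set of D. Then D has a vertex ordering of cutwidth at most 2|F|. -/
/-!
Statement 1: Let D be an Euler directed multigraph and let F be a feedback arc set of D.
Then D has a vertex ordering of cutwidth at most 2|F|.

A directed multigraph on a finite vertex type `V` is given by its multiplicity function
`μ : V × V → ℕ` (no loops: `μ (v, v) = 0`).  A set of arcs of `D` is a sub-multiset of
its arcs, i.e. a function `F : V × V → ℕ` with `F ≤ μ` pointwise; its size `|F|` is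
`∑ a, F a`.  `F` is a feedback arc set when `D − F` (multiplicity `μ a - F a`) has no
directed cycle.  A vertex ordering is an equivalence `e : V ≃ Fin n`; its cutwidth is the
maximum, over positions `i`, of the number of arcs (counted with multiplicity) with one
endpoint among the first `i` vertices and the other among the remaining ones.
-/

/-- `L` is the arc list of a (possibly empty) closed directed walk in the directed
multigraph with arc multiplicities `μ`. -/
def IsClosedWalkM {V : Type} (μ : V × V → ℕ) (L : List (V × V)) : Prop :=
  (∀ a ∈ L, 0 < μ a) ∧ List.Chain' (fun p q => p.2 = q.1) L ∧
    L.getLast?.map Prod.snd = L.head?.map Prod.fst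

/-- `L` is the arc list of a directed cycle in the directed multigraph with arc
multiplicities `μ`. -/
def IsCycleM {V : Type} (μ : V × V → ℕ) (L : List (V × V)) : Prop :=
  L ≠ [] ∧ IsClosedWalkM μ L ∧ (L.map Prod.fst).Nodup

/-- In-degree of a vertex in a directed multigraph (arcs counted with multiplicity). -/
def minDeg {V : Type} [Fintype V] (μ : V × V → ℕ) (v : V) : ℕ := ∑ u, μ (u, v)

/-- Out-degree of a vertex in a directed multigraph (arcs counted with multiplicity). -/
def moutDeg {V : Type} [Fintype V] (μ : V × V → ℕ) (v : V) : ℕ := ∑ u, μ (v, u)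

/-- A directed multigraph is Euler if it has no loops, its underlying undirected graph is
connected and every vertex is balanced. -/
def IsEulerM {V : Type} [Fintype V] (μ : V × V → ℕ) : Prop :=
  (∀ v, μ (v, v) = 0) ∧ (SimpleGraph.fromRel (fun u v => 0 < μ (u, v))).Connected ∧
    ∀ v, minDeg μ v = moutDeg μ v

/-!
Every arc of `D − F` goes strictly forward in a topological ordering of the acyclic multigraph
`D − F`, so the arcs crossing a cut backwards all belong to `F`. Since every vertex of `D` is
balanced, as many arcs cross any cut forwards as backwards, so the cut has at most `2|F|` arcs.
-/

section Cycles

variable {V : Type} {g : V × V → ℕ}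

theorem IsClosedWalkM.exists_isCycleM {L : List (V × V)} (hL : IsClosedWalkM g L)
    (hne : L ≠ []) : ∃ C, IsCycleM g C := by
  induction hlen : L.length using Nat.strong_induction_on generalizing L with
  | _ n ih =>
    by_cases hnd : (L.map Prod.fst).Nodup
    · exact ⟨L, hne, hL, hnd⟩
    -- The arcs between two occurrences of a repeated vertex form a shorter closed walk.
    obtain ⟨w, hw⟩ := List.exists_duplicate_iff_not_nodup.mpr hnd
    obtain ⟨l, hl, hlw⟩ := List.sublist_map_iff.mp (List.duplicate_iff_sublist.mp hw)
    obtain ⟨x, y, rfl, hxw, hyw⟩ : ∃ x y, l = [x, y] ∧ x.1 = w ∧ y.1 = w := by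
      rcases l with _ | ⟨x, _ | ⟨y, _ | ⟨z, l⟩⟩⟩ <;> simp at hlw
      exact ⟨x, y, rfl, hlw.1.symm, hlw.2.symm⟩
    obtain ⟨r₁, r₂, rfl, hx, hy⟩ := List.cons_sublist_iff.mp hl
    obtain ⟨A, B, rfl⟩ := List.append_of_mem hx
    obtain ⟨C, D, rfl⟩ := List.append_of_mem (List.singleton_sublist.mp hy)
    have hsplit : A ++ x :: B ++ (C ++ y :: D) = A ++ ((x :: (B ++ C)) ++ y :: D) := by simp
    rw [hsplit] at hL hlen
    refine ih (x :: (B ++ C)).length (by simp at hlen ⊢; omega) (L := x :: (B ++ C)) ?_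
      (List.cons_ne_nil _ _) rfl
    obtain ⟨hpos, hchain, -⟩ := hL
    obtain ⟨-, hchain, -⟩ := List.isChain_append.mp hchain
    obtain ⟨hchain, -, hlink⟩ := List.isChain_append.mp hchain
    refine ⟨fun a ha => hpos a (by simp at ha ⊢; tauto), hchain, ?_⟩
    obtain ⟨z, hz⟩ :=
      Option.isSome_iff_exists.mp (List.getLast?_isSome.mpr (List.cons_ne_nil x (B ++ C)))
    rw [hz, List.head?_cons, Option.map_some, Option.map_some, hlink z hz y rfl, hyw, hxw]

theorem exists_walk_of_transGen {u v : V} (h : Relation.TransGen (fun a b => 0 < g (a, b)) u v) :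
    ∃ L : List (V × V), L ≠ [] ∧ (∀ a ∈ L, 0 < g a) ∧ L.IsChain (fun p q => p.2 = q.1) ∧
      L.head?.map Prod.fst = some u ∧ L.getLast?.map Prod.snd = some v := by
  induction h with
  | single h => exact ⟨[(u, _)], by simp, by simpa using h, List.isChain_singleton _, rfl, rfl⟩
  | @tail b c _ hbc ih =>
    obtain ⟨L, hne, hpos, hchain, hhead, hlast⟩ := ih
    refine ⟨L ++ [(b, c)], by simp, ?_, ?_, ?_, by simp⟩
    · intro a ha
      rcases List.mem_append.mp ha with ha | ha
      · exact hpos a ha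
      · simpa [List.mem_singleton.mp ha] using hbc
    · refine hchain.append (List.isChain_singleton _) ?_
      intro p hp q hq
      rw [Option.mem_def] at hp hq
      simp only [hp, Option.map_some, Option.some.injEq] at hlast
      simp only [List.head?_cons, Option.some.injEq] at hq
      rw [hlast, ← hq]
    · rwa [List.head?_append_of_ne_nil _ hne]

theorem not_transGen_self_of_forall_not_isCycleM (h : ∀ L, ¬ IsCycleM g L) (v : V) :
    ¬ Relation.TransGen (fun a b => 0 < g (a, b)) v v := by
  intro hv
  obtain ⟨L, hne, hpos, hchain, hhead, hlast⟩ := exists_walk_of_transGen hv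
  obtain ⟨C, hC⟩ := IsClosedWalkM.exists_isCycleM ⟨hpos, hchain, hlast.trans hhead.symm⟩ hne
  exact h C hC

end Cycles

theorem exists_equiv_fin_lt_of_not_transGen_self {V : Type} [Fintype V] {r : V → V → Prop}
    (h : ∀ v, ¬ Relation.TransGen r v v) :
    ∃ e : V ≃ Fin (Fintype.card V), ∀ u v, r u v → e u < e v := by
  have : IsPartialOrder V (Relation.ReflTransGen r) :=
    { refl := fun _ => .refl
      trans := fun _ _ _ => .trans
      antisymm := fun a b hab hba => by
        rcases Relation.reflTransGen_iff_eq_or_transGen.mp hab with rfl | hab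
        · rfl
        · exact absurd (hab.trans_left hba) (h a) }
  obtain ⟨s, hs, hrs⟩ := extend_partialOrder (Relation.ReflTransGen r)
  let : LinearOrder V :=
    { le := s
      le_refl := hs.refl
      le_trans := fun _ _ _ => hs.trans _ _ _
      le_antisymm := fun _ _ => hs.antisymm _ _
      le_total := hs.total
      toDecidableLE := Classical.decRel _ }
  let e := (Fintype.orderIsoFinOfCardEq V rfl).symm
  refine ⟨e.toEquiv, fun u v huv => e.strictMono (lt_of_le_of_ne (hrs _ _ (.single huv)) ?_)⟩
  rintro rfl
  exact h u (.single huv)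

section Cuts

variable {V : Type} [Fintype V] {μ : V × V → ℕ}

theorem sum_filter_out_eq_sum_filter_in
    (hbal : ∀ v, minDeg μ v = moutDeg μ v) (p : V → Prop) [DecidablePred p] :
    ∑ a with p a.1 ∧ ¬ p a.2, μ a = ∑ a with p a.2 ∧ ¬ p a.1, μ a := by
  have hout : ∑ a with p a.1, μ a = ∑ v with p v, moutDeg μ v := by
    rw [Finset.sum_filter, Finset.sum_filter, Fintype.sum_prod_type]
    refine Finset.sum_congr rfl fun v _ => ?_
    by_cases hv : p v <;> simp [hv, moutDeg]
  have hin : ∑ a with p a.2, μ a = ∑ v with p v, minDeg μ v := by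
    rw [Finset.sum_filter, Finset.sum_filter, Fintype.sum_prod_type_right]
    refine Finset.sum_congr rfl fun v _ => ?_
    by_cases hv : p v <;> simp [hv, minDeg]
  have hbalanced : ∑ a with p a.1, μ a = ∑ a with p a.2, μ a := by
    simp only [hout, hin, hbal]
  have hcount : ∑ a with p a.1, μ a + ∑ a with p a.2 ∧ ¬ p a.1, μ a =
      ∑ a with p a.2, μ a + ∑ a with p a.1 ∧ ¬ p a.2, μ a := by
    simp only [Finset.sum_filter, ← Finset.sum_add_distrib]
    refine Finset.sum_congr rfl fun a _ => ?_
    split_ifs <;> simp_all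
  omega

theorem sum_filter_cut_eq_two_mul
    (hbal : ∀ v, minDeg μ v = moutDeg μ v) (p : V → Prop) [DecidablePred p] :
    ∑ a with (p a.1 ∧ ¬ p a.2) ∨ (p a.2 ∧ ¬ p a.1), μ a =
      2 * ∑ a with p a.2 ∧ ¬ p a.1, μ a := by
  classical
  rw [Finset.filter_or, Finset.sum_union, sum_filter_out_eq_sum_filter_in hbal, two_mul]
  exact Finset.disjoint_filter.mpr fun a _ h h' => h.2 h'.1

end Cuts

theorem stmt1_general {V : Type} [Fintype V] (μ : V × V → ℕ)
    (hEuler : IsEulerM μ)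
    (F : V × V → ℕ)
    (hFfeedback : ∀ L : List (V × V), ¬ IsCycleM (fun a => μ a - F a) L) :
    ∃ e : V ≃ Fin (Fintype.card V), ∀ i : ℕ,
      (∑ a ∈ Finset.univ.filter (fun a : V × V =>
          (((e a.1 : ℕ) < i ∧ i ≤ (e a.2 : ℕ)) ∨ ((e a.2 : ℕ) < i ∧ i ≤ (e a.1 : ℕ)))),
        μ a) ≤ 2 * ∑ a : V × V, F a := by
  obtain ⟨e, he⟩ :=
    exists_equiv_fin_lt_of_not_transGen_self (not_transGen_self_of_forall_not_isCycleM hFfeedback)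
  refine ⟨e, fun i => ?_⟩
  let p : V → Prop := fun v => (e v : ℕ) < i
  have hback (a : V × V) (ha : p a.2 ∧ ¬ p a.1) : μ a ≤ F a := by
    by_contra hlt
    have := he a.1 a.2 (by rw [Prod.mk.eta]; omega)
    simp only [p] at ha
    omega
  calc _ = ∑ a with (p a.1 ∧ ¬ p a.2) ∨ (p a.2 ∧ ¬ p a.1), μ a := by
          simp only [p, not_lt]
      _ = 2 * ∑ a with p a.2 ∧ ¬ p a.1, μ a := sum_filter_cut_eq_two_mul hEuler.2.2 p
      _ ≤ 2 * ∑ a with p a.2 ∧ ¬ p a.1, F a := by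
          gcongr with a ha
          exact hback a (Finset.mem_filter.mp ha).2
      _ ≤ 2 * ∑ a, F a := by
          gcongr
          exact Finset.filter_subset _ _

theorem stmt1 {V : Type} [Fintype V] [DecidableEq V] (μ : V × V → ℕ)
    (hEuler : IsEulerM μ)
    (F : V × V → ℕ) (hFsub : ∀ a, F a ≤ μ a)
    (hFfeedback : ∀ L : List (V × V), ¬ IsCycleM (fun a => μ a - F a) L) :
    ∃ e : V ≃ Fin (Fintype.card V), ∀ i : ℕ,
      (∑ a ∈ Finset.univ.filter (fun a : V × V =>
          (((e a.1 : ℕ) < i ∧ i ≤ (e a.2 : ℕ)) ∨ ((e a.2 : ℕ) < i ∧ i ≤ (e a.1 : ℕ)))),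
        μ a) ≤ 2 * ∑ a : V × V, F a :=
  stmt1_general μ hEuler F hFfeedback
end

section
/- Let G be a connected digraph with nonnegative integer arc weights, let T be an optimal DCPP solution on G, and suppose that the directed multigraph G_T contains k pairwise arc-disjoint directed cycles. Then there exists a k-DCPP solution on G whose weight equals the weight of T; consequently, the minimum weight of a k-DCPP solution on G equals the minimum weight of a DCPP solution on G. -/
/-!
Statement 5: Let G be a connected digraph with nonnegative integer arc weights, let T be
an optimal DCPP solution on G, and suppose that the directed multigraph G_T (in which
each arc of G has multiplicity equal to the number of times T traverses it) contains
k ≥ 1 pairwise arc-disjoint directed cycles.  Then there exists a k-DCPP solution on G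
whose weight equals the weight of T; consequently, the minimum weight of a k-DCPP
solution equals the minimum weight of a DCPP solution (namely, the weight of T).
-/

/-- `L` is the arc list of a (possibly empty) closed directed walk in the digraph
with arc set `A`. -/
def IsClosedWalk {V : Type} (A : Finset (V × V)) (L : List (V × V)) : Prop :=
  (∀ a ∈ L, a ∈ A) ∧ List.Chain' (fun p q => p.2 = q.1) L ∧
    L.getLast?.map Prod.snd = L.head?.map Prod.fst

/-- The underlying undirected (simple) graph of a digraph. -/
def UGraph {V : Type} (A : Finset (V × V)) : SimpleGraph V :=
  SimpleGraph.fromRel (fun u v => (u, v) ∈ A)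

/-- Weight of a walk: sum of the weights of all traversed arcs, counted with
multiplicity. -/
def walkWeight {V : Type} (ω : V × V → ℕ) (L : List (V × V)) : ℕ := (L.map ω).sum

/-- A DCPP solution: a closed directed walk traversing every arc at least once. -/
def IsDCPP {V : Type} (A : Finset (V × V)) (L : List (V × V)) : Prop :=
  IsClosedWalk A L ∧ ∀ a ∈ A, a ∈ L

/-- A k-DCPP solution: `k` non-empty closed directed walks jointly traversing every
arc at least once. -/
def IsKDCPP {V : Type} (A : Finset (V × V)) (k : ℕ) (W : Fin k → List (V × V)) : Prop :=
  (∀ i, W i ≠ [] ∧ IsClosedWalk A (W i)) ∧ ∀ a ∈ A, ∃ i, a ∈ W i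

/-- Total weight of a k-tuple of walks. -/
def kWalkWeight {V : Type} (ω : V × V → ℕ) {k : ℕ} (W : Fin k → List (V × V)) : ℕ :=
  ∑ i, walkWeight ω (W i)

/-!
Deleting the `k` arc-disjoint cycles from `G_T` leaves a balanced arc multiset (in-degree equals
out-degree everywhere), which splits into closed walks. These closed walks and the `k` cycles use
the arcs of `G_T` exactly once each; since `G` is connected, as long as there are more than `k` of
them two share a vertex and can be spliced into one, which ends with `k` closed walks of total
weight `ω(T)`. Conversely, splicing the `k` walks of any k-DCPP solution into a single closed walk
gives a DCPP solution of the same weight, so none is lighter than `T`.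
-/

theorem Multiset.exists_ofFn_eq {α : Type*} {s : Multiset α} {k : ℕ}
    (hs : Multiset.card s = k) : ∃ f : Fin k → α, (List.ofFn f : Multiset α) = s := by
  obtain ⟨l, rfl⟩ := Quot.exists_rep s
  subst hs
  exact ⟨l.get, congrArg _ (List.ofFn_get l)⟩

section ClosedChains

variable {V : Type}

def IsClosedChain (L : List (V × V)) : Prop :=
  L.IsChain (fun p q => p.2 = q.1) ∧ L.getLast?.map Prod.snd = L.head?.map Prod.fst

theorem isClosedChain_iff {L : List (V × V)} :
    IsClosedChain L ↔ L.IsChain (fun p q => p.2 = q.1) ∧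
      ∀ x ∈ L.getLast?, ∀ y ∈ L.head?, x.2 = y.1 := by
  cases L with
  | nil => simp [IsClosedChain]
  | cons a l => simp [IsClosedChain, List.getLast?_eq_some_getLast (List.cons_ne_nil a l)]

theorem isClosedChain_iff_of_ne_nil {L : List (V × V)} (hL : L ≠ []) :
    IsClosedChain L ↔ L.IsChain (fun p q => p.2 = q.1) ∧ (L.getLast hL).2 = (L.head hL).1 := by
  simp [IsClosedChain, List.getLast?_eq_some_getLast hL, List.head?_eq_some_head hL]

theorem isClosedChain_append_iff {l₁ l₂ : List (V × V)} (h₁ : l₁ ≠ []) (h₂ : l₂ ≠ []) :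
    IsClosedChain (l₁ ++ l₂) ↔
      l₁.IsChain (fun p q => p.2 = q.1) ∧ l₂.IsChain (fun p q => p.2 = q.1) ∧
      (∀ x ∈ l₁.getLast?, ∀ y ∈ l₂.head?, x.2 = y.1) ∧
      (∀ x ∈ l₂.getLast?, ∀ y ∈ l₁.head?, x.2 = y.1) := by
  rw [isClosedChain_iff, List.isChain_append, List.getLast?_append_of_ne_nil _ h₂,
    List.head?_append_of_ne_nil _ h₁]
  simp only [and_assoc]

theorem IsClosedChain.rotate {l₁ l₂ : List (V × V)} (h : IsClosedChain (l₁ ++ l₂)) :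
    IsClosedChain (l₂ ++ l₁) := by
  rcases eq_or_ne l₁ [] with rfl | h₁
  · simpa using h
  rcases eq_or_ne l₂ [] with rfl | h₂
  · simpa using h
  rw [isClosedChain_append_iff h₁ h₂] at h
  rw [isClosedChain_append_iff h₂ h₁]
  tauto

theorem IsClosedChain.exists_perm_cons {L : List (V × V)} (h : IsClosedChain L) {v : V}
    (hv : v ∈ L.map Prod.fst) :
    ∃ a r, a.1 = v ∧ IsClosedChain (a :: r) ∧ (a :: r).Perm L := by
  obtain ⟨a, haL, rfl⟩ := List.mem_map.mp hv
  obtain ⟨s, t, rfl⟩ := List.append_of_mem haL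
  exact ⟨a, t ++ s, rfl, h.rotate, (List.perm_append_comm (l₁ := a :: t)).trans (by simp)⟩

theorem IsClosedChain.cons_append_cons {a b : V × V} {p q : List (V × V)}
    (hp : IsClosedChain (a :: p)) (hq : IsClosedChain (b :: q)) (hab : a.1 = b.1) :
    IsClosedChain (a :: p ++ b :: q) := by
  rw [isClosedChain_iff] at hp hq
  rw [isClosedChain_append_iff (List.cons_ne_nil a p) (List.cons_ne_nil b q)]
  refine ⟨hp.1, hq.1, ?_, ?_⟩ <;> simp only [List.head?_cons, Option.mem_some_iff] at hp hq ⊢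
  · rintro x hx y rfl
    rw [← hab]
    exact hp.2 x hx a rfl
  · rintro x hx y rfl
    rw [hab]
    exact hq.2 x hx b rfl

theorem IsClosedChain.exists_splice {P Q : List (V × V)} (hP : IsClosedChain P)
    (hQ : IsClosedChain Q) {v : V} (hvP : v ∈ P.map Prod.fst) (hvQ : v ∈ Q.map Prod.fst) :
    ∃ L : List (V × V), L ≠ [] ∧ IsClosedChain L ∧
      (L : Multiset (V × V)) = (P : Multiset (V × V)) + Q := by
  obtain ⟨a, p, rfl, hp, hpP⟩ := hP.exists_perm_cons hvP
  obtain ⟨b, q, hb, hq, hqQ⟩ := hQ.exists_perm_cons hvQ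
  refine ⟨a :: p ++ b :: q, by simp, hp.cons_append_cons hq hb.symm, ?_⟩
  rw [← Multiset.coe_add, Multiset.coe_eq_coe.2 hpP, Multiset.coe_eq_coe.2 hqQ]

theorem List.IsChain.map_fst_append_getLast {L : List (V × V)}
    (hL : L.IsChain (fun p q => p.2 = q.1)) (h : L ≠ []) :
    L.map Prod.fst ++ [(L.getLast h).2] = (L.head h).1 :: L.map Prod.snd := by
  induction L with
  | nil => contradiction
  | cons a l ih =>
    rcases eq_or_ne l [] with rfl | hl
    · simp
    obtain ⟨b, l', rfl⟩ := List.exists_cons_of_ne_nil hl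
    have hab : a.2 = b.1 := (List.isChain_cons_cons.mp hL).1
    rw [List.getLast_cons hl, List.map_cons, List.cons_append, ih hL.tail hl]
    simp [hab]

def IsBalanced (M : Multiset (V × V)) : Prop := M.map Prod.fst = M.map Prod.snd

theorem IsClosedChain.isBalanced {L : List (V × V)} (h : IsClosedChain L) :
    IsBalanced (L : Multiset (V × V)) := by
  rcases eq_or_ne L [] with rfl | hL
  · rfl
  obtain ⟨hc, hlast⟩ := (isClosedChain_iff_of_ne_nil hL).1 h
  have hperm := List.perm_append_singleton (L.head hL).1 (L.map Prod.fst)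
  rw [← hlast, hc.map_fst_append_getLast hL, hlast] at hperm
  simp only [IsBalanced, Multiset.map_coe, Multiset.coe_eq_coe]
  exact ((List.perm_cons _).1 hperm).symm

theorem IsBalanced.add {M N : Multiset (V × V)} (hM : IsBalanced M) (hN : IsBalanced N) :
    IsBalanced (M + N) := by
  unfold IsBalanced at *
  rw [Multiset.map_add, Multiset.map_add, hM, hN]

theorem IsBalanced.tsub [DecidableEq V] {M N : Multiset (V × V)} (hM : IsBalanced M)
    (hN : IsBalanced N) (hNM : N ≤ M) : IsBalanced (M - N) := by
  obtain ⟨D, rfl⟩ := Multiset.le_iff_exists_add.1 hNM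
  unfold IsBalanced at *
  rw [add_tsub_cancel_left]
  rw [Multiset.map_add, Multiset.map_add, hN] at hM
  exact add_left_cancel hM

theorem IsBalanced.exists_mem_tsub_fst_eq_getLast [DecidableEq V] {M : Multiset (V × V)}
    (hM : IsBalanced M) {P : List (V × V)} (hc : P.IsChain (fun p q => p.2 = q.1))
    (hP : P ≠ []) (hPM : (P : Multiset (V × V)) ≤ M) (hopen : (P.getLast hP).2 ≠ (P.head hP).1) :
    ∃ b ∈ M - P, b.1 = (P.getLast hP).2 := by
  -- `P` enters its last vertex once more often than it leaves it; balance of `M` then forces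
  -- an arc of `M - P` out of that vertex
  set x := (P.getLast hP).2
  have hP' : (P.map Prod.fst).count x + 1 = (P.map Prod.snd).count x := by
    simpa [x, List.count_cons, Ne.symm hopen] using
      congrArg (List.count x) (hc.map_fst_append_getLast hP)
  have hM' := congrArg (Multiset.count x) hM
  rw [← add_tsub_cancel_of_le hPM] at hM'
  simp only [Multiset.map_add, Multiset.count_add, Multiset.map_coe, Multiset.coe_count] at hM'
  obtain ⟨b, hb, hbx⟩ := Multiset.mem_map.1 (Multiset.count_pos.1 (by omega :
    0 < Multiset.count x ((M - P).map Prod.fst)))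
  exact ⟨b, hb, hbx⟩

theorem IsBalanced.exists_isClosedChain_of_isChain [DecidableEq V] {M : Multiset (V × V)}
    (hM : IsBalanced M) (P : List (V × V)) (hc : P.IsChain (fun p q => p.2 = q.1))
    (hP : P ≠ []) (hPM : (P : Multiset (V × V)) ≤ M) :
    ∃ L : List (V × V), L ≠ [] ∧ IsClosedChain L ∧ (L : Multiset (V × V)) ≤ M := by
  by_cases hclosed : (P.getLast hP).2 = (P.head hP).1
  · exact ⟨P, hP, (isClosedChain_iff_of_ne_nil hP).2 ⟨hc, hclosed⟩, hPM⟩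
  obtain ⟨b, hbM, hb⟩ := hM.exists_mem_tsub_fst_eq_getLast hc hP hPM hclosed
  have hPbM : ((P ++ [b] : List (V × V)) : Multiset (V × V)) ≤ M := by
    rw [← Multiset.coe_add]
    exact (add_le_add_right (Multiset.singleton_le.2 hbM) _).trans_eq (add_tsub_cancel_of_le hPM)
  have hcard : P.length + 1 ≤ Multiset.card M := by simpa using Multiset.card_le_card hPbM
  refine hM.exists_isClosedChain_of_isChain (P ++ [b])
    (hc.append (List.isChain_singleton b) ?_) (by simp) hPbM
  simp [List.getLast?_eq_some_getLast hP, hb]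
termination_by Multiset.card M - P.length

theorem IsBalanced.exists_isClosedChain [DecidableEq V] {M : Multiset (V × V)}
    (hM : IsBalanced M) (hM0 : M ≠ 0) :
    ∃ L : List (V × V), L ≠ [] ∧ IsClosedChain L ∧ (L : Multiset (V × V)) ≤ M := by
  obtain ⟨a, ha⟩ := Multiset.exists_mem_of_ne_zero hM0
  exact hM.exists_isClosedChain_of_isChain [a] (List.isChain_singleton a) (by simp)
    (by simpa using ha)

def IsClosedChainDecomp (Ms : Multiset (List (V × V))) (M : Multiset (V × V)) : Prop :=
  (∀ L ∈ Ms, L ≠ [] ∧ IsClosedChain L) ∧ Ms.bind (↑) = M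

theorem IsBalanced.exists_isClosedChainDecomp [DecidableEq V] {M : Multiset (V × V)}
    (hM : IsBalanced M) : ∃ Ms, IsClosedChainDecomp Ms M := by
  rcases eq_or_ne M 0 with rfl | hM0
  · exact ⟨0, by simp, by simp⟩
  obtain ⟨L, hL, hLc, hLM⟩ := hM.exists_isClosedChain hM0
  have hcard : Multiset.card (M - L : Multiset (V × V)) < Multiset.card M := by
    rw [Multiset.card_sub hLM, Multiset.coe_card]
    have := Multiset.card_le_card hLM
    have := List.length_pos_iff.2 hL
    simp only [Multiset.coe_card] at *
    omega
  obtain ⟨Ms, hMs, hMsM⟩ := (hM.tsub hLc.isBalanced hLM).exists_isClosedChainDecomp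
  refine ⟨L ::ₘ Ms, ?_, ?_⟩
  · rintro L' hL'
    rcases Multiset.mem_cons.1 hL' with rfl | hL'
    exacts [⟨hL, hLc⟩, hMs L' hL']
  · rw [Multiset.cons_bind, hMsM, add_tsub_cancel_of_le hLM]
termination_by Multiset.card M

theorem IsClosedChainDecomp.isBalanced {Ms : Multiset (List (V × V))} {M : Multiset (V × V)}
    (h : IsClosedChainDecomp Ms M) : IsBalanced M := by
  obtain ⟨hMs, rfl⟩ := h
  induction Ms using Multiset.induction with
  | empty => rfl
  | cons L Ms ih =>
    rw [Multiset.cons_bind]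
    exact (hMs L (Multiset.mem_cons_self L Ms)).2.isBalanced.add
      (ih fun L' hL' => hMs L' (Multiset.mem_cons_of_mem hL'))

theorem IsClosedChainDecomp.add {Ms Ns : Multiset (List (V × V))} {M N : Multiset (V × V)}
    (hM : IsClosedChainDecomp Ms M) (hN : IsClosedChainDecomp Ns N) :
    IsClosedChainDecomp (Ms + Ns) (M + N) := by
  refine ⟨fun L hL => ?_, by rw [Multiset.add_bind, hM.2, hN.2]⟩
  rcases Multiset.mem_add.1 hL with hL | hL
  exacts [hM.1 L hL, hN.1 L hL]

theorem IsClosedChain.snd_mem_map_fst {L : List (V × V)} (h : IsClosedChain L) {a : V × V}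
    (ha : a ∈ L) : a.2 ∈ L.map Prod.fst := by
  have : a.2 ∈ (L : Multiset (V × V)).map Prod.snd := Multiset.mem_map_of_mem _ ha
  rwa [← h.isBalanced, Multiset.map_coe, Multiset.mem_coe] at this

section Merging

variable [DecidableEq V] {A : Finset (V × V)} {M : Multiset (V × V)}

theorem IsClosedChainDecomp.exists_mem_map_fst_of_connected {Ms : Multiset (List (V × V))}
    (h : IsClosedChainDecomp Ms M)
    (hconn : (UGraph A).Connected) (hcover : ∀ a ∈ A, a ∈ M) (hMs : 2 ≤ Multiset.card Ms) :
    ∃ P ∈ Ms, ∃ Q ∈ Ms.erase P, ∃ v, v ∈ P.map Prod.fst ∧ v ∈ Q.map Prod.fst := by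
  obtain ⟨P, hP⟩ := Multiset.card_pos_iff_exists_mem.1 (by omega : 0 < Multiset.card Ms)
  obtain ⟨Q, hQ⟩ := Multiset.card_pos_iff_exists_mem.1
    (by rw [Multiset.card_erase_of_mem hP, Nat.pred_eq_sub_one]; omega :
      0 < Multiset.card (Ms.erase P))
  obtain ⟨hPne, -⟩ := h.1 P hP
  obtain ⟨hQne, -⟩ := h.1 Q (Multiset.mem_of_mem_erase hQ)
  have hends : ∀ L ∈ Ms, ∀ b ∈ L, ∀ x, (b.1 = x ∨ b.2 = x) → x ∈ L.map Prod.fst := by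
    rintro L hL b hb x (rfl | rfl)
    exacts [List.mem_map_of_mem hb, (h.1 L hL).2.snd_mem_map_fst hb]
  by_cases hw : (Q.head hQne).1 ∈ P.map Prod.fst
  · exact ⟨P, hP, Q, hQ, _, hw, List.mem_map_of_mem (List.head_mem hQne)⟩
  -- a walk leaving the vertex set of `P` crosses an arc lying in some other piece
  obtain ⟨p⟩ := hconn.preconnected (P.head hPne).1 (Q.head hQne).1
  obtain ⟨d, -, hdP, hdP'⟩ := p.exists_boundary_dart {v | v ∈ P.map Prod.fst}
    (List.mem_map_of_mem (List.head_mem hPne)) hw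
  obtain ⟨b, hbA, hbx, hby⟩ :
      ∃ b ∈ A, (b.1 = d.fst ∨ b.2 = d.fst) ∧ (b.1 = d.snd ∨ b.2 = d.snd) := by
    rcases (SimpleGraph.fromRel_adj _ _ _).1 d.adj |>.2 with h | h
    exacts [⟨_, h, Or.inl rfl, Or.inr rfl⟩, ⟨_, h, Or.inr rfl, Or.inl rfl⟩]
  obtain ⟨R, hR, hbR⟩ := Multiset.mem_bind.1 (h.2 ▸ hcover b hbA)
  have hRP : R ≠ P := by
    rintro rfl
    exact hdP' (hends R hR b hbR _ hby)
  exact ⟨P, hP, R, (Multiset.mem_erase_of_ne hRP).2 hR, d.fst, hdP, hends R hR b hbR _ hbx⟩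

theorem IsClosedChainDecomp.exists_card_add_one_eq {Ms : Multiset (List (V × V))}
    (h : IsClosedChainDecomp Ms M)
    (hconn : (UGraph A).Connected) (hcover : ∀ a ∈ A, a ∈ M) (hMs : 2 ≤ Multiset.card Ms) :
    ∃ Ns, Multiset.card Ns + 1 = Multiset.card Ms ∧ IsClosedChainDecomp Ns M := by
  obtain ⟨P, hP, Q, hQ, v, hvP, hvQ⟩ := h.exists_mem_map_fst_of_connected hconn hcover hMs
  have hQ' := Multiset.mem_of_mem_erase hQ
  obtain ⟨L, hL, hLc, hLPQ⟩ := (h.1 P hP).2.exists_splice (h.1 Q hQ').2 hvP hvQ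
  have hMs_eq : Ms = P ::ₘ Q ::ₘ (Ms.erase P).erase Q := by
    rw [Multiset.cons_erase hQ, Multiset.cons_erase hP]
  refine ⟨L ::ₘ (Ms.erase P).erase Q, ?_, fun R hR => ?_, ?_⟩
  · rw [hMs_eq]
    simp
  · rcases Multiset.mem_cons.1 hR with rfl | hR
    exacts [⟨hL, hLc⟩, h.1 R (Multiset.mem_of_mem_erase (Multiset.mem_of_mem_erase hR))]
  · conv_rhs => rw [← h.2, hMs_eq]
    rw [Multiset.cons_bind, Multiset.cons_bind, Multiset.cons_bind, hLPQ, add_assoc]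

theorem IsClosedChainDecomp.exists_card_eq {Ms : Multiset (List (V × V))}
    (h : IsClosedChainDecomp Ms M) (hconn : (UGraph A).Connected) (hcover : ∀ a ∈ A, a ∈ M)
    {n : ℕ} (hn : 1 ≤ n)
    (hnMs : n ≤ Multiset.card Ms) : ∃ Ns, Multiset.card Ns = n ∧ IsClosedChainDecomp Ns M := by
  rcases hnMs.eq_or_lt with rfl | hlt
  · exact ⟨Ms, rfl, h⟩
  obtain ⟨Ns, hNs, h'⟩ := h.exists_card_add_one_eq hconn hcover (by omega)
  exact h'.exists_card_eq hconn hcover hn (by omega)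
termination_by Multiset.card Ms

end Merging

theorem isClosedChainDecomp_singleton {L : List (V × V)} {M : Multiset (V × V)} :
    IsClosedChainDecomp {L} M ↔ L ≠ [] ∧ IsClosedChain L ∧ (L : Multiset (V × V)) = M := by
  simp [IsClosedChainDecomp, and_assoc]

theorem isDCPP_iff {A : Finset (V × V)} {L : List (V × V)} :
    IsDCPP A L ↔ IsClosedChain L ∧ ∀ a, a ∈ L ↔ a ∈ A :=
  ⟨fun ⟨⟨hA, hc⟩, hcov⟩ => ⟨hc, fun a => ⟨hA a, hcov a⟩⟩,
    fun ⟨hc, h⟩ => ⟨⟨fun a => (h a).1, hc⟩, fun a => (h a).2⟩⟩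

theorem isKDCPP_iff {A : Finset (V × V)} {k : ℕ} {W : Fin k → List (V × V)} :
    IsKDCPP A k W ↔ ∃ M, IsClosedChainDecomp (List.ofFn W : Multiset (List (V × V))) M ∧
      ∀ a, a ∈ M ↔ a ∈ A := by
  have hmem : ∀ a, a ∈ (List.ofFn W : Multiset (List (V × V))).bind (↑) ↔ ∃ i, a ∈ W i := by
    simp [Multiset.mem_bind, List.mem_ofFn]
  constructor
  · rintro ⟨hW, hcov⟩
    refine ⟨_, ⟨?_, rfl⟩, fun a => ⟨fun ha => ?_, fun ha => (hmem a).2 (hcov a ha)⟩⟩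
    · simp only [Multiset.mem_coe, List.mem_ofFn]
      rintro _ ⟨i, rfl⟩
      exact ⟨(hW i).1, (hW i).2.2⟩
    · obtain ⟨i, hi⟩ := (hmem a).1 ha
      exact (hW i).2.1 a hi
  · rintro ⟨M, ⟨hW, rfl⟩, hM⟩
    refine ⟨fun i => ?_, fun a ha => (hmem a).1 ((hM a).2 ha)⟩
    obtain ⟨hne, hc⟩ := hW (W i) (by simp [List.mem_ofFn])
    exact ⟨hne, fun a ha => (hM a).1 ((hmem a).2 ⟨i, ha⟩), hc⟩

theorem walkWeight_eq (ω : V × V → ℕ) (L : List (V × V)) :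
    walkWeight ω L = ((L : Multiset (V × V)).map ω).sum := by
  simp [walkWeight]

theorem kWalkWeight_eq (ω : V × V → ℕ) {k : ℕ} (W : Fin k → List (V × V)) :
    kWalkWeight ω W = (((List.ofFn W : Multiset (List (V × V))).bind (↑)).map ω).sum := by
  rw [Multiset.map_bind, Multiset.sum_bind, Multiset.map_coe, Multiset.sum_coe, List.map_ofFn,
    List.sum_ofFn]
  simp [kWalkWeight, walkWeight_eq]

end ClosedChains

theorem stmt5_general {V : Type} [DecidableEq V] (A : Finset (V × V))
    (ω : V × V → ℕ) (hconn : (UGraph A).Connected)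
    (k : ℕ) (hk : 1 ≤ k)
    (T : List (V × V)) (hT : IsDCPP A T)
    (hTopt : ∀ T' : List (V × V), IsDCPP A T' → walkWeight ω T ≤ walkWeight ω T')
    -- k pairwise arc-disjoint directed cycles in the multigraph G_T :
    (C : Fin k → List (V × V)) (hC : ∀ i, IsCycleM (fun a => T.count a) (C i))
    (hdisj : ∀ a : V × V, (∑ i, (C i).count a) ≤ T.count a) :
    ∃ W : Fin k → List (V × V), IsKDCPP A k W ∧
      kWalkWeight ω W = walkWeight ω T ∧
      ∀ W' : Fin k → List (V × V), IsKDCPP A k W' →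
        walkWeight ω T ≤ kWalkWeight ω W' := by
  obtain ⟨hTc, hTA⟩ := isDCPP_iff.1 hT
  have hCdec : IsClosedChainDecomp (List.ofFn C : Multiset (List (V × V)))
      (∑ i, (C i : Multiset (V × V))) := by
    refine ⟨?_, by simp [Multiset.bind, Multiset.join, List.sum_ofFn]⟩
    simp only [Multiset.mem_coe, List.mem_ofFn]
    rintro _ ⟨i, rfl⟩
    exact ⟨(hC i).1, (hC i).2.1.2⟩
  have hCT : ∑ i, (C i : Multiset (V × V)) ≤ T :=
    Multiset.le_iff_count.2 fun a => by
      simp only [Multiset.count_sum', Multiset.coe_count]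
      convert hdisj a
  obtain ⟨Rs, hRs⟩ := (hTc.isBalanced.tsub hCdec.isBalanced hCT).exists_isClosedChainDecomp
  have hTdec := hCdec.add hRs
  rw [add_tsub_cancel_of_le hCT] at hTdec
  obtain ⟨Qs, hQk, hQs⟩ := hTdec.exists_card_eq hconn (fun a ha => (hTA a).2 ha) hk (by simp)
  obtain ⟨W, rfl⟩ := Multiset.exists_ofFn_eq hQk
  refine ⟨W, isKDCPP_iff.2 ⟨_, hQs, by simpa using hTA⟩,
    by rw [kWalkWeight_eq, hQs.2, walkWeight_eq], fun W' hW' => ?_⟩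
  obtain ⟨M, hW'dec, hMA⟩ := isKDCPP_iff.1 hW'
  obtain ⟨Ls, hLs, hLsdec⟩ :=
    hW'dec.exists_card_eq hconn (fun a ha => (hMA a).2 ha) le_rfl (by simpa using hk)
  obtain ⟨L, rfl⟩ := Multiset.card_eq_one.1 hLs
  obtain ⟨-, hLc, rfl⟩ := isClosedChainDecomp_singleton.1 hLsdec
  calc walkWeight ω T ≤ walkWeight ω L := hTopt L (isDCPP_iff.2 ⟨hLc, by simpa using hMA⟩)
    _ = kWalkWeight ω W' := by rw [kWalkWeight_eq, hW'dec.2, walkWeight_eq]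

theorem stmt5 {V : Type} [Fintype V] [DecidableEq V] (A : Finset (V × V))
    (ω : V × V → ℕ) (hloop : ∀ v : V, (v, v) ∉ A) (hconn : (UGraph A).Connected)
    (k : ℕ) (hk : 1 ≤ k)
    (T : List (V × V)) (hT : IsDCPP A T)
    (hTopt : ∀ T' : List (V × V), IsDCPP A T' → walkWeight ω T ≤ walkWeight ω T')
    -- k pairwise arc-disjoint directed cycles in the multigraph G_T :
    (C : Fin k → List (V × V)) (hC : ∀ i, IsCycleM (fun a => T.count a) (C i))
    (hdisj : ∀ a : V × V, (∑ i, (C i).count a) ≤ T.count a) :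
    ∃ W : Fin k → List (V × V), IsKDCPP A k W ∧
      kWalkWeight ω W = walkWeight ω T ∧
      ∀ W' : Fin k → List (V × V), IsKDCPP A k W' →
        walkWeight ω T ≤ kWalkWeight ω W' :=
  stmt5_general A ω hconn k hk T hT hTopt C hC hdisj
end

section
/- Let G=(V,A) be a connected digraph with nonnegative integer arc weights ω, let 0 ≤ b ≤ c and k ≥ 1 be integers, fix a vertex ordering ν=(v_1,...,v_n) of G, and let 1 ≤ i ≤ n. Let E_i* = E_i \ E_{i−1}, let φ: E_i×[k] → {0,1,...,c} and S ⊆ [k], and let Y = Σ_{j∈S} Σ_{a∈E_i*} φ(a,j)·ω(a). (i) If there exists a ∈ E_i with Σ_{j∈[k]} φ(a,j) < b or Σ_{j∈[k]} φ(a,j) > c, then χ(E_i,φ,S) = ∞. (ii) Otherwise, χ(E_i,φ,S) = Y + min over all φ': E_{i−1}×[k] → {0,1,...,c} and S' ⊆ [k] satisfying the following three conditions of χ(E_{i−1},φ',S'): (a) φ'(a,j) = φ(a,j) for all a ∈ E_i ∩ E_{i−1} and all j ∈ [k]; (b) for all j ∈ [k], Σ_{a ∈ A⁺(v_i)∩E_{i−1}}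 φ'(a,j) + Σ_{a ∈ A⁺(v_i)∩E_i} φ(a,j) = Σ_{a ∈ A⁻(v_i)∩E_{i−1}} φ'(a,j) + Σ_{a ∈ A⁻(v_i)∩E_i} φ(a,j), where A⁺(v_i) and A⁻(v_i) denote the sets of arcs of G leaving and entering v_i; (c) S = S' ∪ {j ∈ [k] : Σ_{a∈E_i*} φ(a,j) > 0}. Here the minimum is taken to be ∞ if no such pair (φ',S') exists. -/
/-- The arc bag `E_i`: arcs of `A` with one endpoint among the first `i` vertices of the
ordering `ν` and the other endpoint among the remaining vertices. -/
def Ebag {V : Type} [DecidableEq V] {n : ℕ} (A : Finset (V × V)) (ν : Fin n ≃ V)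
    (i : ℕ) : Finset (V × V) :=
  A.filter (fun a =>
    (((ν.symm a.1 : ℕ) < i ∧ i ≤ (ν.symm a.2 : ℕ)) ∨
      ((ν.symm a.2 : ℕ) < i ∧ i ≤ (ν.symm a.1 : ℕ))))

/-- `γ(i) = E_0 ∪ E_1 ∪ ... ∪ E_i`: the arcs of `A` with at least one endpoint among the
first `i` vertices of the ordering `ν`. -/
def gam {V : Type} [DecidableEq V] {n : ℕ} (A : Finset (V × V)) (ν : Fin n ≃ V)
    (i : ℕ) : Finset (V × V) :=
  A.filter (fun a => (ν.symm a.1 : ℕ) < i ∨ (ν.symm a.2 : ℕ) < i)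

/-- The dynamic-programming quantity `χ(E_i, φ, S)`: the minimum, over all tuples
`(A_1, ..., A_k)` of multisets of arcs of `γ(i)` satisfying conditions (1)-(4), of the
total weight `Σ_j Σ_{a ∈ A_j} ω(a)`; it is `∞` (`⊤` in `ℕ∞`) if no such tuple exists. -/
noncomputable def chi {V : Type} [Fintype V] [DecidableEq V] {n : ℕ}
    (A : Finset (V × V)) (ω : V × V → ℕ) (b c k : ℕ) (ν : Fin n ≃ V)
    (i : ℕ) (φ : V × V → Fin k → ℕ) (S : Finset (Fin k)) : ℕ∞ :=
  sInf {ρ : ℕ∞ | ∃ M : Fin k → V × V → ℕ,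
    -- the `M j` are multisets of arcs of γ(i)
    (∀ j a, M j a ≠ 0 → a ∈ gam A ν i) ∧
    -- (1) for every a ∈ E_i and j ∈ [k], A_j contains exactly φ(a,j) copies of a
    (∀ a ∈ Ebag A ν i, ∀ j, M j a = φ a j) ∧
    -- (2) every arc of γ(i) occurs between b and c times in A_1 ∪ ... ∪ A_k
    (∀ a ∈ gam A ν i, b ≤ (∑ j, M j a) ∧ (∑ j, M j a) ≤ c) ∧
    -- (3) for every h ≤ i and j ∈ S, v_h is balanced in A_j
    (∀ h : Fin n, (h : ℕ) < i → ∀ j ∈ S,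
      (∑ u, M j (u, ν h)) = ∑ u, M j (ν h, u)) ∧
    -- (4) A_j is non-empty iff j ∈ S
    (∀ j, (∃ a, M j a ≠ 0) ↔ j ∈ S) ∧
    -- (5) ρ is the total weight
    (ρ = ((∑ j, ∑ a, M j a * ω a : ℕ) : ℕ∞))}

/-!
Write `i = m + 1` and `E* = E_{m+1} \ E_m`: the arcs of `E*` join `v_{m+1}` to later vertices,
and since there are no loops, `γ(m+1)` is the disjoint union of `γ(m)` and `E*`. Hence a witness
`M` for `χ(E_{m+1}, φ, S)` is exactly a witness `M'` for some `χ(E_m, φ', S')` with `φ` added on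
`E*`, where `φ'` records the values of `M` on `E_m`. The multiplicity bounds and the support
conditions transfer arc by arc; arcs of `E*` do not meet `v_1, ..., v_m`, so balance there is
unaffected; and every arc of `γ(m+1)` at `v_{m+1}` lies in exactly one of `E_m` and `E_{m+1}`,
which turns balance at `v_{m+1}` into condition (b). Condition (c) makes `φ` vanish on `E*`
outside `S`, so the two weights differ by exactly `Y`.
-/

open Finset

lemma ENat.sInf_mem_of_ne_top {s : Set ℕ∞} (h : sInf s ≠ ⊤) : sInf s ∈ s :=
  csInf_mem (Set.nonempty_iff_ne_empty.2 fun he => h (by rw [he, sInf_empty]))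

section ChiRecursion

variable {V : Type} {n k : ℕ} {A : Finset (V × V)} {ν : Fin n ≃ V}

lemma val_symm_eq_of_eq {x : V} {m : ℕ} {hm : m < n} (hx : x = ν ⟨m, hm⟩) :
    (ν.symm x : ℕ) = m := by
  simp [hx]

lemma val_symm_fst_ne_snd (hloop : ∀ v : V, (v, v) ∉ A) {a : V × V} (ha : a ∈ A) :
    (ν.symm a.1 : ℕ) ≠ ν.symm a.2 := fun h => by
  obtain ⟨x, y⟩ := a
  obtain rfl : x = y := ν.symm.injective (Fin.ext h)
  exact hloop x ha

variable [DecidableEq V]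

lemma mem_Ebag {i : ℕ} {a : V × V} :
    a ∈ Ebag A ν i ↔ a ∈ A ∧
      ((ν.symm a.1 : ℕ) < i ∧ i ≤ ν.symm a.2 ∨ (ν.symm a.2 : ℕ) < i ∧ i ≤ ν.symm a.1) :=
  mem_filter

lemma mem_gam {i : ℕ} {a : V × V} :
    a ∈ gam A ν i ↔ a ∈ A ∧ ((ν.symm a.1 : ℕ) < i ∨ (ν.symm a.2 : ℕ) < i) :=
  mem_filter

lemma Ebag_subset_gam (i : ℕ) : Ebag A ν i ⊆ gam A ν i := fun a ha => by
  rw [mem_Ebag] at ha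
  exact mem_gam.2 ⟨ha.1, by omega⟩

lemma gam_mono : Monotone (gam A ν) := fun i i' hii' a ha => by
  rw [mem_gam] at ha ⊢
  exact ⟨ha.1, by omega⟩

lemma disjoint_gam_Ebag_succ_sdiff (m : ℕ) :
    Disjoint (gam A ν m) (Ebag A ν (m + 1) \ Ebag A ν m) := by
  refine disjoint_left.2 fun a hg he => ?_
  obtain ⟨hA, hg⟩ := mem_gam.1 hg
  simp only [mem_sdiff, mem_Ebag, hA, true_and] at he
  omega

lemma gam_succ_subset (hloop : ∀ v : V, (v, v) ∉ A) (m : ℕ) :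
    gam A ν (m + 1) ⊆ gam A ν m ∪ (Ebag A ν (m + 1) \ Ebag A ν m) := fun a ha => by
  obtain ⟨hA, ha⟩ := mem_gam.1 ha
  have := val_symm_fst_ne_snd (ν := ν) hloop hA
  simp only [mem_union, mem_sdiff, mem_gam, mem_Ebag, hA, true_and]
  omega

lemma notMem_Ebag_succ_sdiff_of_lt {m : ℕ} {h : Fin n} (hh : (h : ℕ) < m) {a : V × V}
    (ha : a.1 = ν h ∨ a.2 = ν h) : a ∉ Ebag A ν (m + 1) \ Ebag A ν m := by
  rw [mem_sdiff, not_and, not_not]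
  intro he
  rw [mem_Ebag] at he ⊢
  refine ⟨he.1, ?_⟩
  rcases ha with ha | ha <;> have := val_symm_eq_of_eq ha <;> omega

lemma mem_Ebag_or_mem_Ebag_succ (hloop : ∀ v : V, (v, v) ∉ A) {m : ℕ} (hm : m < n)
    {a : V × V} (ha : a ∈ gam A ν (m + 1)) (hv : a.1 = ν ⟨m, hm⟩ ∨ a.2 = ν ⟨m, hm⟩) :
    a ∈ Ebag A ν m ∨ a ∈ Ebag A ν (m + 1) := by
  obtain ⟨hA, ha⟩ := mem_gam.1 ha
  have := val_symm_fst_ne_snd (ν := ν) hloop hA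
  simp only [mem_Ebag, hA, true_and]
  rcases hv with hv | hv <;> have := val_symm_eq_of_eq hv <;> omega

lemma notMem_Ebag_inter_Ebag_succ {m : ℕ} (hm : m < n) {a : V × V}
    (hv : a.1 = ν ⟨m, hm⟩ ∨ a.2 = ν ⟨m, hm⟩) : a ∉ Ebag A ν m ∩ Ebag A ν (m + 1) := by
  simp only [mem_inter, mem_Ebag]
  rcases hv with hv | hv <;> have := val_symm_eq_of_eq hv <;> omega

def addOn (M : Fin k → V × V → ℕ) (E : Finset (V × V)) (φ : V × V → Fin k → ℕ) :
    Fin k → V × V → ℕ :=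
  fun j a => M j a + if a ∈ E then φ a j else 0

section AddOn

variable {M : Fin k → V × V → ℕ} {E : Finset (V × V)} {φ : V × V → Fin k → ℕ} {j : Fin k}
  {a : V × V}

lemma addOn_of_notMem (ha : a ∉ E) : addOn M E φ j a = M j a := by
  simp [addOn, ha]

lemma addOn_of_mem (ha : a ∈ E) (hM : M j a = 0) : addOn M E φ j a = φ a j := by
  simp [addOn, ha, hM]

lemma exists_addOn_ne_zero_iff :
    (∃ a, addOn M E φ j a ≠ 0) ↔ (∃ a, M j a ≠ 0) ∨ 0 < ∑ a ∈ E, φ a j := by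
  simp only [addOn, ne_eq, Nat.add_eq_zero_iff, not_and_or, exists_or, pos_iff_ne_zero,
    sum_eq_zero_iff, not_forall, ite_eq_right_iff, exists_prop]

variable [Fintype V]

lemma sum_addOn_in_eq_sum_out_iff {m : ℕ} {h : Fin n} (hh : (h : ℕ) < m) :
    (∑ u, addOn M (Ebag A ν (m + 1) \ Ebag A ν m) φ j (u, ν h)
        = ∑ u, addOn M (Ebag A ν (m + 1) \ Ebag A ν m) φ j (ν h, u)) ↔
      ∑ u, M j (u, ν h) = ∑ u, M j (ν h, u) := by
  rw [sum_congr rfl fun u _ => addOn_of_notMem (notMem_Ebag_succ_sdiff_of_lt hh (Or.inr rfl)),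
    sum_congr rfl fun u _ => addOn_of_notMem (notMem_Ebag_succ_sdiff_of_lt hh (Or.inl rfl))]

end AddOn

variable [Fintype V]

lemma sum_filter_fst_eq (v : V) (F : V × V → ℕ) :
    ∑ a ∈ univ.filter (fun a : V × V => a.1 = v), F a = ∑ u, F (v, u) := by
  rw [sum_filter, Fintype.sum_prod_type, sum_eq_single v] <;> simp +contextual

lemma sum_filter_snd_eq (v : V) (F : V × V → ℕ) :
    ∑ a ∈ univ.filter (fun a : V × V => a.2 = v), F a = ∑ u, F (u, v) := by
  rw [sum_filter, Fintype.sum_prod_type_right, sum_eq_single v] <;> simp +contextual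

lemma sum_filter_eq_add_of_incident (hloop : ∀ v : V, (v, v) ∉ A) {m : ℕ} (hm : m < n)
    {p : V × V → Prop} [DecidablePred p] (hp : ∀ a, p a → a.1 = ν ⟨m, hm⟩ ∨ a.2 = ν ⟨m, hm⟩)
    {F : V × V → ℕ} (hF : ∀ a, F a ≠ 0 → a ∈ gam A ν (m + 1)) :
    ∑ a ∈ univ.filter p, F a
      = ∑ a ∈ (Ebag A ν m).filter p, F a + ∑ a ∈ (Ebag A ν (m + 1)).filter p, F a := by
  have hdisj : Disjoint ((Ebag A ν m).filter p) ((Ebag A ν (m + 1)).filter p) :=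
    disjoint_left.2 fun a h h' =>
      notMem_Ebag_inter_Ebag_succ hm (hp a (mem_filter.1 h).2)
        (mem_inter.2 ⟨(mem_filter.1 h).1, (mem_filter.1 h').1⟩)
  rw [← sum_union hdisj, ← filter_union]
  refine (sum_subset (filter_subset_filter _ (subset_univ _)) fun a ha ha' => ?_).symm
  by_contra hFa
  obtain ⟨-, hpa⟩ := mem_filter.1 ha
  exact ha' (mem_filter.2
    ⟨mem_union.2 (mem_Ebag_or_mem_Ebag_succ hloop hm (hF a hFa) (hp a hpa)), hpa⟩)

lemma sum_in_eq_sum_out_iff (hloop : ∀ v : V, (v, v) ∉ A) {m : ℕ} (hm : m < n)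
    {F f' f : V × V → ℕ} (hF : ∀ a, F a ≠ 0 → a ∈ gam A ν (m + 1))
    (hf' : ∀ a ∈ Ebag A ν m, F a = f' a) (hf : ∀ a ∈ Ebag A ν (m + 1), F a = f a) :
    (∑ u, F (u, ν ⟨m, hm⟩) = ∑ u, F (ν ⟨m, hm⟩, u)) ↔
      (∑ a ∈ (Ebag A ν m).filter (fun a => a.1 = ν ⟨m, hm⟩), f' a)
          + ∑ a ∈ (Ebag A ν (m + 1)).filter (fun a => a.1 = ν ⟨m, hm⟩), f a
        = (∑ a ∈ (Ebag A ν m).filter (fun a => a.2 = ν ⟨m, hm⟩), f' a)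
          + ∑ a ∈ (Ebag A ν (m + 1)).filter (fun a => a.2 = ν ⟨m, hm⟩), f a := by
  have hf'_sum (p : V × V → Prop) [DecidablePred p] :
      ∑ a ∈ (Ebag A ν m).filter p, F a = ∑ a ∈ (Ebag A ν m).filter p, f' a :=
    sum_congr rfl fun a ha => hf' a (mem_filter.1 ha).1
  have hf_sum (p : V × V → Prop) [DecidablePred p] :
      ∑ a ∈ (Ebag A ν (m + 1)).filter p, F a = ∑ a ∈ (Ebag A ν (m + 1)).filter p, f a :=
    sum_congr rfl fun a ha => hf a (mem_filter.1 ha).1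
  rw [← sum_filter_fst_eq, ← sum_filter_snd_eq,
    sum_filter_eq_add_of_incident hloop hm (fun _ => Or.inr) hF,
    sum_filter_eq_add_of_incident hloop hm (fun _ => Or.inl) hF,
    hf'_sum, hf'_sum, hf_sum, hf_sum, eq_comm]

structure IsChiWitness (A : Finset (V × V)) (b c : ℕ) (ν : Fin n ≃ V) (i : ℕ)
    (φ : V × V → Fin k → ℕ) (S : Finset (Fin k)) (M : Fin k → V × V → ℕ) : Prop where
  mem_gam_of_ne_zero : ∀ j a, M j a ≠ 0 → a ∈ gam A ν i
  eq_on_Ebag : ∀ a ∈ Ebag A ν i, ∀ j, M j a = φ a j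
  mult_bounds : ∀ a ∈ gam A ν i, b ≤ ∑ j, M j a ∧ ∑ j, M j a ≤ c
  balanced : ∀ h : Fin n, (h : ℕ) < i → ∀ j ∈ S, ∑ u, M j (u, ν h) = ∑ u, M j (ν h, u)
  exists_ne_zero_iff : ∀ j, (∃ a, M j a ≠ 0) ↔ j ∈ S

def weight (ω : V × V → ℕ) (M : Fin k → V × V → ℕ) : ℕ :=
  ∑ j, ∑ a, M j a * ω a

section Witness

variable {ω : V × V → ℕ} {b c i : ℕ} {φ : V × V → Fin k → ℕ} {S : Finset (Fin k)}
  {M : Fin k → V × V → ℕ}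

lemma chi_le_weight (hM : IsChiWitness A b c ν i φ S M) :
    chi A ω b c k ν i φ S ≤ weight ω M :=
  sInf_le ⟨M, hM.mem_gam_of_ne_zero, hM.eq_on_Ebag, hM.mult_bounds, hM.balanced,
    hM.exists_ne_zero_iff, rfl⟩

lemma le_chi {x : ℕ∞} (h : ∀ M, IsChiWitness A b c ν i φ S M → x ≤ weight ω M) :
    x ≤ chi A ω b c k ν i φ S :=
  le_sInf <| by
    rintro _ ⟨M, h0, h1, h2, h3, h4, rfl⟩
    exact h M ⟨h0, h1, h2, h3, h4⟩

lemma exists_isChiWitness_of_chi_ne_top (h : chi A ω b c k ν i φ S ≠ ⊤) :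
    ∃ M, IsChiWitness A b c ν i φ S M ∧ chi A ω b c k ν i φ S = weight ω M := by
  unfold chi at h ⊢
  obtain ⟨M, h0, h1, h2, h3, h4, hM⟩ := ENat.sInf_mem_of_ne_top h
  exact ⟨M, ⟨h0, h1, h2, h3, h4⟩, hM⟩

lemma chi_eq_top_of_mem_Ebag {a : V × V} (ha : a ∈ Ebag A ν i)
    (hφa : ∑ j, φ a j < b ∨ c < ∑ j, φ a j) : chi A ω b c k ν i φ S = ⊤ :=
  top_le_iff.1 <| le_chi fun M hM => by
    have hMa := hM.mult_bounds a (Ebag_subset_gam i ha)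
    have hsum : ∑ j, M j a = ∑ j, φ a j := sum_congr rfl fun j _ => hM.eq_on_Ebag a ha j
    omega

lemma IsChiWitness.eq_zero_of_notMem (hM : IsChiWitness A b c ν i φ S M) {j : Fin k}
    (hj : j ∉ S) (a : V × V) : M j a = 0 := by
  by_contra h
  exact hj ((hM.exists_ne_zero_iff j).1 ⟨a, h⟩)

lemma IsChiWitness.eq_zero_of_notMem_gam (hM : IsChiWitness A b c ν i φ S M) {a : V × V}
    (ha : a ∉ gam A ν i) (j : Fin k) : M j a = 0 := by
  by_contra h
  exact ha (hM.mem_gam_of_ne_zero j a h)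

lemma IsChiWitness.sum_in_eq_sum_out (hM : IsChiWitness A b c ν i φ S M) (h : Fin n)
    (hh : (h : ℕ) < i) (j : Fin k) : ∑ u, M j (u, ν h) = ∑ u, M j (ν h, u) := by
  by_cases hj : j ∈ S
  · exact hM.balanced h hh j hj
  · simp [hM.eq_zero_of_notMem hj]

end Witness

lemma weight_addOn {M : Fin k → V × V → ℕ} {E : Finset (V × V)} {φ : V × V → Fin k → ℕ}
    (ω : V × V → ℕ) :
    weight ω (addOn M E φ) = weight ω M + ∑ j, ∑ a ∈ E, φ a j * ω a := by
  simp only [weight, addOn, add_mul, sum_add_distrib, ite_mul, zero_mul, sum_ite_mem, univ_inter]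

/-- The side conditions on `(φ', S')` in the recursion for `χ(E_{m+1}, φ, S)`, where
`v_{m+1} = ν ⟨m, hm⟩`. -/
def IsPredecessor (A : Finset (V × V)) (c : ℕ) (ν : Fin n ≃ V) (m : ℕ) (hm : m < n)
    (φ φ' : V × V → Fin k → ℕ) (S S' : Finset (Fin k)) : Prop :=
  (∀ a ∈ Ebag A ν m, ∀ j, φ' a j ≤ c) ∧
  (∀ a ∈ Ebag A ν (m + 1) ∩ Ebag A ν m, ∀ j, φ' a j = φ a j) ∧
  (∀ j : Fin k,
    (∑ a ∈ (Ebag A ν m).filter (fun a => a.1 = ν ⟨m, hm⟩), φ' a j)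
        + ∑ a ∈ (Ebag A ν (m + 1)).filter (fun a => a.1 = ν ⟨m, hm⟩), φ a j
      = (∑ a ∈ (Ebag A ν m).filter (fun a => a.2 = ν ⟨m, hm⟩), φ' a j)
        + ∑ a ∈ (Ebag A ν (m + 1)).filter (fun a => a.2 = ν ⟨m, hm⟩), φ a j) ∧
  S = S' ∪ univ.filter (fun j => 0 < ∑ a ∈ Ebag A ν (m + 1) \ Ebag A ν m, φ a j)

section Recursion

variable {ω : V × V → ℕ} {b c m : ℕ} {φ φ' : V × V → Fin k → ℕ}
  {S S' : Finset (Fin k)} {M M' : Fin k → V × V → ℕ}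

lemma IsPredecessor.weight_addOn {hm : m < n} (hpred : IsPredecessor A c ν m hm φ φ' S S') :
    weight ω (addOn M' (Ebag A ν (m + 1) \ Ebag A ν m) φ)
      = (∑ j ∈ S, ∑ a ∈ Ebag A ν (m + 1) \ Ebag A ν m, φ a j * ω a) + weight ω M' := by
  rw [_root_.weight_addOn, add_comm]
  congr 1
  refine (sum_subset (subset_univ S) fun j _ hj => sum_eq_zero fun a ha => ?_).symm
  have hφj : ∑ a ∈ Ebag A ν (m + 1) \ Ebag A ν m, φ a j = 0 := by
    by_contra h
    rw [hpred.2.2.2] at hj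
    exact hj (mem_union_right _ (mem_filter.2 ⟨mem_univ j, Nat.pos_of_ne_zero h⟩))
  rw [sum_eq_zero_iff.1 hφj a ha, zero_mul]

theorem IsChiWitness.succ_of_isPredecessor {hm : m < n} (hloop : ∀ v : V, (v, v) ∉ A)
    (hφ : ∀ a ∈ Ebag A ν (m + 1), b ≤ ∑ j, φ a j ∧ ∑ j, φ a j ≤ c)
    (hpred : IsPredecessor A c ν m hm φ φ' S S') (hM' : IsChiWitness A b c ν m φ' S' M') :
    IsChiWitness A b c ν (m + 1) φ S (addOn M' (Ebag A ν (m + 1) \ Ebag A ν m) φ) := by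
  obtain ⟨-, hagree, hbal, hS⟩ := hpred
  have hdisj := disjoint_gam_Ebag_succ_sdiff (A := A) (ν := ν) m
  have heq_pred (a : V × V) (ha : a ∈ Ebag A ν m) (j : Fin k) :
      addOn M' (Ebag A ν (m + 1) \ Ebag A ν m) φ j a = φ' a j := by
    rw [addOn_of_notMem fun h => (mem_sdiff.1 h).2 ha, hM'.eq_on_Ebag a ha j]
  have heq (a : V × V) (ha : a ∈ Ebag A ν (m + 1)) (j : Fin k) :
      addOn M' (Ebag A ν (m + 1) \ Ebag A ν m) φ j a = φ a j := by
    by_cases ha' : a ∈ Ebag A ν m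
    · rw [heq_pred a ha' j, hagree a (mem_inter.2 ⟨ha, ha'⟩) j]
    · have hE := mem_sdiff.2 ⟨ha, ha'⟩
      exact addOn_of_mem hE (hM'.eq_zero_of_notMem_gam (disjoint_right.1 hdisj hE) j)
  have hsupp (j : Fin k) (a : V × V) (h : addOn M' (Ebag A ν (m + 1) \ Ebag A ν m) φ j a ≠ 0) :
      a ∈ gam A ν (m + 1) := by
    by_cases hE : a ∈ Ebag A ν (m + 1) \ Ebag A ν m
    · exact Ebag_subset_gam _ (mem_sdiff.1 hE).1
    · rw [addOn_of_notMem hE] at h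
      exact gam_mono m.le_succ (hM'.mem_gam_of_ne_zero j a h)
  refine ⟨hsupp, heq, fun a ha => ?_, fun h hh j _ => ?_, fun j => ?_⟩
  · rcases mem_union.1 (gam_succ_subset hloop m ha) with hg | hE
    · rw [sum_congr rfl fun j _ => addOn_of_notMem (disjoint_left.1 hdisj hg)]
      exact hM'.mult_bounds a hg
    · rw [sum_congr rfl fun j _ => heq a (mem_sdiff.1 hE).1 j]
      exact hφ a (mem_sdiff.1 hE).1
  · rcases Nat.lt_succ_iff_lt_or_eq.1 hh with hh | hh
    · exact (sum_addOn_in_eq_sum_out_iff hh).2 (hM'.sum_in_eq_sum_out h hh j)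
    · obtain rfl : h = ⟨m, hm⟩ := Fin.ext hh
      exact (sum_in_eq_sum_out_iff hloop hm (hsupp j) (fun a ha => heq_pred a ha j)
        (fun a ha => heq a ha j)).2 (hbal j)
  · rw [exists_addOn_ne_zero_iff, hM'.exists_ne_zero_iff, hS, mem_union, mem_filter]
    simp only [mem_univ, true_and]

theorem IsChiWitness.exists_isPredecessor (hm : m < n) (hloop : ∀ v : V, (v, v) ∉ A)
    (hM : IsChiWitness A b c ν (m + 1) φ S M) :
    ∃ φ' S' M', IsPredecessor A c ν m hm φ φ' S S' ∧ IsChiWitness A b c ν m φ' S' M' ∧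
      M = addOn M' (Ebag A ν (m + 1) \ Ebag A ν m) φ := by
  have hdisj := disjoint_gam_Ebag_succ_sdiff (A := A) (ν := ν) m
  obtain ⟨M', hM'⟩ : ∃ M' : Fin k → V × V → ℕ,
      ∀ j a, M' j a = if a ∈ gam A ν m then M j a else 0 := ⟨_, fun _ _ => rfl⟩
  have hM_eq : M = addOn M' (Ebag A ν (m + 1) \ Ebag A ν m) φ := by
    funext j a
    by_cases hg : a ∈ gam A ν m
    · rw [addOn_of_notMem (disjoint_left.1 hdisj hg), hM', if_pos hg]
    by_cases hE : a ∈ Ebag A ν (m + 1) \ Ebag A ν m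
    · rw [addOn_of_mem hE (by rw [hM', if_neg hg]), hM.eq_on_Ebag a (mem_sdiff.1 hE).1 j]
    · have ha : a ∉ gam A ν (m + 1) := fun h => by
        rcases mem_union.1 (gam_succ_subset hloop m h) with h | h
        exacts [hg h, hE h]
      rw [addOn_of_notMem hE, hM.eq_zero_of_notMem_gam ha, hM', if_neg hg]
  have hM'_eq (a : V × V) (ha : a ∈ gam A ν m) (j : Fin k) : M' j a = M j a := by
    rw [hM', if_pos ha]
  refine ⟨fun a j => M j a, univ.filter fun j => ∃ a, M' j a ≠ 0, M',
    ⟨fun a ha j => ?_, fun a ha j => hM.eq_on_Ebag a (mem_inter.1 ha).1 j, fun j => ?_, ?_⟩,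
    ⟨fun j a h => ?_, fun a ha j => hM'_eq a (Ebag_subset_gam m ha) j, fun a ha => ?_,
      fun h hh j _ => ?_, fun j => by simp⟩, hM_eq⟩
  · have hMa := (hM.mult_bounds a (gam_mono m.le_succ (Ebag_subset_gam m ha))).2
    exact (single_le_sum (fun j _ => Nat.zero_le (M j a)) (mem_univ j)).trans hMa
  · exact (sum_in_eq_sum_out_iff hloop hm (hM.mem_gam_of_ne_zero j) (fun a _ => rfl)
      (fun a ha => hM.eq_on_Ebag a ha j)).1 (hM.sum_in_eq_sum_out ⟨m, hm⟩ m.lt_succ_self j)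
  · ext j
    rw [← hM.exists_ne_zero_iff, hM_eq, exists_addOn_ne_zero_iff]
    simp
  · by_contra hg
    rw [hM', if_neg hg] at h
    exact h rfl
  · rw [sum_congr rfl fun j _ => hM'_eq a ha j]
    exact hM.mult_bounds a (gam_mono m.le_succ ha)
  · have hbal := hM.sum_in_eq_sum_out h (hh.trans m.lt_succ_self) j
    rwa [hM_eq, sum_addOn_in_eq_sum_out_iff hh] at hbal

lemma chi_succ_le_add_chi {hm : m < n} (hloop : ∀ v : V, (v, v) ∉ A)
    (hφ : ∀ a ∈ Ebag A ν (m + 1), b ≤ ∑ j, φ a j ∧ ∑ j, φ a j ≤ c)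
    (hpred : IsPredecessor A c ν m hm φ φ' S S') :
    chi A ω b c k ν (m + 1) φ S
      ≤ ((∑ j ∈ S, ∑ a ∈ Ebag A ν (m + 1) \ Ebag A ν m, φ a j * ω a : ℕ) : ℕ∞)
        + chi A ω b c k ν m φ' S' := by
  by_cases htop : chi A ω b c k ν m φ' S' = ⊤
  · rw [htop, add_top]
    exact le_top
  obtain ⟨M', hM', hchi⟩ := exists_isChiWitness_of_chi_ne_top htop
  calc chi A ω b c k ν (m + 1) φ S
      ≤ weight ω (addOn M' (Ebag A ν (m + 1) \ Ebag A ν m) φ) :=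
        chi_le_weight (hM'.succ_of_isPredecessor hloop hφ hpred)
    _ = _ := by rw [hpred.weight_addOn, hchi, Nat.cast_add]

lemma exists_isPredecessor_add_chi_le (hm : m < n) (hloop : ∀ v : V, (v, v) ∉ A)
    (hM : IsChiWitness A b c ν (m + 1) φ S M) :
    ∃ φ' S', IsPredecessor A c ν m hm φ φ' S S' ∧
      ((∑ j ∈ S, ∑ a ∈ Ebag A ν (m + 1) \ Ebag A ν m, φ a j * ω a : ℕ) : ℕ∞)
        + chi A ω b c k ν m φ' S' ≤ weight ω M := by
  obtain ⟨φ', S', M', hpred, hM', rfl⟩ := hM.exists_isPredecessor hm hloop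
  refine ⟨φ', S', hpred, ?_⟩
  rw [hpred.weight_addOn, Nat.cast_add]
  exact add_le_add_right (chi_le_weight hM') _

theorem chi_succ_eq (hm : m < n) (hloop : ∀ v : V, (v, v) ∉ A)
    (hφ : ∀ a ∈ Ebag A ν (m + 1), b ≤ ∑ j, φ a j ∧ ∑ j, φ a j ≤ c) :
    chi A ω b c k ν (m + 1) φ S
      = ((∑ j ∈ S, ∑ a ∈ Ebag A ν (m + 1) \ Ebag A ν m, φ a j * ω a : ℕ) : ℕ∞)
        + sInf {ρ : ℕ∞ | ∃ (φ' : V × V → Fin k → ℕ) (S' : Finset (Fin k)),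
            IsPredecessor A c ν m hm φ φ' S S' ∧ ρ = chi A ω b c k ν m φ' S'} := by
  refine le_antisymm ?_ (le_chi fun M hM => ?_)
  · rw [ENat.add_sInf]
    refine le_iInf₂ ?_
    rintro _ ⟨φ', S', hpred, rfl⟩
    exact chi_succ_le_add_chi hloop hφ hpred
  · obtain ⟨φ', S', hpred, hle⟩ := exists_isPredecessor_add_chi_le hm hloop hM
    refine le_trans ?_ hle
    gcongr
    exact sInf_le ⟨φ', S', hpred, rfl⟩

end Recursion

end ChiRecursion

theorem stmt12 {V : Type} [Fintype V] [DecidableEq V] (A : Finset (V × V))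
    (ω : V × V → ℕ) (hloop : ∀ v : V, (v, v) ∉ A)
    (b c k : ℕ)
    (n : ℕ) (ν : Fin n ≃ V) (i : ℕ) (hi1 : 1 ≤ i) (hin : i ≤ n)
    (φ : V × V → Fin k → ℕ)
    (S : Finset (Fin k)) :
    -- part (i)
    ((∃ a ∈ Ebag A ν i, (∑ j, φ a j) < b ∨ c < ∑ j, φ a j) →
      chi A ω b c k ν i φ S = ⊤) ∧
    -- part (ii)
    ((∀ a ∈ Ebag A ν i, b ≤ (∑ j, φ a j) ∧ (∑ j, φ a j) ≤ c) →
      chi A ω b c k ν i φ S =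
        -- Y :
        ((∑ j ∈ S, ∑ a ∈ Ebag A ν i \ Ebag A ν (i - 1), φ a j * ω a : ℕ) : ℕ∞) +
        sInf {ρ : ℕ∞ | ∃ (φ' : V × V → Fin k → ℕ) (S' : Finset (Fin k)),
          -- φ' : E_{i-1} × [k] → [0, c]
          (∀ a ∈ Ebag A ν (i - 1), ∀ j, φ' a j ≤ c) ∧
          -- (a) φ' agrees with φ on E_i ∩ E_{i-1}
          (∀ a ∈ Ebag A ν i ∩ Ebag A ν (i - 1), ∀ j, φ' a j = φ a j) ∧
          -- (b) balance at v_i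
          (∀ j : Fin k,
            ((∑ a ∈ (Ebag A ν (i - 1)).filter (fun a => a.1 = ν ⟨i - 1, by omega⟩), φ' a j)
              + ∑ a ∈ (Ebag A ν i).filter (fun a => a.1 = ν ⟨i - 1, by omega⟩), φ a j)
            = ((∑ a ∈ (Ebag A ν (i - 1)).filter (fun a => a.2 = ν ⟨i - 1, by omega⟩), φ' a j)
              + ∑ a ∈ (Ebag A ν i).filter (fun a => a.2 = ν ⟨i - 1, by omega⟩), φ a j)) ∧
          -- (c) S = S' ∪ {j : Σ_{a ∈ E_i*} φ(a,j) > 0}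
          (S = S' ∪ Finset.univ.filter
            (fun j => 0 < ∑ a ∈ Ebag A ν i \ Ebag A ν (i - 1), φ a j)) ∧
          -- the value χ(E_{i-1}, φ', S')
          ρ = chi A ω b c k ν (i - 1) φ' S'}) := by
  obtain ⟨m, rfl⟩ : ∃ m, i = m + 1 := ⟨i - 1, by omega⟩
  refine ⟨fun ⟨a, ha, hφa⟩ => chi_eq_top_of_mem_Ebag ha hφa, fun hφ => ?_⟩
  simpa only [IsPredecessor, Nat.add_sub_cancel, and_assoc] using
    chi_succ_eq (by omega) hloop hφ
end

section
/- Let D be a digraph whose underlying undirected graph is connected and which has at least one vertex v with d⁺(v) ≠ d⁻(v). Construct H from D as follows: add two new vertices x and y together with the arcs xy and yx; for each vertex v of D, add max{d⁻(v)−d⁺(v), 0} parallel arcs from v to x and max{d⁺(v)−d⁻(v), 0} parallel arcs from x to v; finally, subdivide every arc between x and V(D) (replace each such arc by a directed path of length two through a new vertex), so that H has no parallel arcs. Then H is an Euler digraph, and ν₀(H) = ν₀(D) + 1, where ν₀ denotes the maximum number of pairwise vertex-disjoint directed cycles. -/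
/-!
Statement 13: Let D be a connected digraph with at least one unbalanced vertex.
Construct H from D by adding two new vertices x and y with the arcs xy and yx, adding
max{d⁻(v)−d⁺(v), 0} parallel arcs from v to x and max{d⁺(v)−d⁻(v), 0} parallel arcs from
x to v for each vertex v of D, and finally subdividing every arc between x and V(D).
Then H is an Euler digraph and ν₀(H) = ν₀(D) + 1, where ν₀ is the maximum number of
pairwise vertex-disjoint directed cycles.

A digraph on a vertex type `α` is encoded by its adjacency relation `R : α → α → Prop`
(no loops, no parallel arcs).  Degrees are obtained via `Nat.card`.  The vertex set of
`H` is `V ⊕ (Bool ⊕ (W⁻ ⊕ W⁺))`, where `x = .inr (.inl true)`, `y = .inr (.inl false)`,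
and `W⁻`, `W⁺` are the subdivision vertices of the arcs into and out of `x`.
-/

/-- `L` is the arc list of a directed cycle for the adjacency relation `R`: a non-empty
list of arcs, consecutive head-to-tail, closing up, visiting no vertex twice. -/
def IsCycleR {α : Type} (R : α → α → Prop) (L : List (α × α)) : Prop :=
  L ≠ [] ∧ (∀ p ∈ L, R p.1 p.2) ∧ List.Chain' (fun p q => p.2 = q.1) L ∧
    L.getLast?.map Prod.snd = L.head?.map Prod.fst ∧ (L.map Prod.fst).Nodup

/-- The maximum number of pairwise vertex-disjoint directed cycles. -/
noncomputable def nu0 {α : Type} (R : α → α → Prop) : ℕ :=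
  sSup {k : ℕ | ∃ C : Fin k → List (α × α), (∀ i, IsCycleR R (C i)) ∧
    ∀ i j, i ≠ j → ∀ v ∈ (C i).map Prod.fst, v ∉ (C j).map Prod.fst}

/-- Out-degree of a vertex. -/
noncomputable def outdegR {α : Type} (R : α → α → Prop) (v : α) : ℕ :=
  Nat.card {u // R v u}

/-- In-degree of a vertex. -/
noncomputable def indegR {α : Type} (R : α → α → Prop) (v : α) : ℕ :=
  Nat.card {u // R u v}

/-- The vertex set of `H`: the vertices of `D`, the two new vertices `x` (coded `true`)
and `y` (coded `false`), the subdivision vertices of the `max{d⁻(v)−d⁺(v),0}` arcs from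
`v` to `x`, and the subdivision vertices of the `max{d⁺(v)−d⁻(v),0}` arcs from `x`
to `v`. -/
def HVert (V : Type) (R : V → V → Prop) : Type :=
  V ⊕ (Bool ⊕ ((Σ v : V, Fin (indegR R v - outdegR R v)) ⊕
    (Σ v : V, Fin (outdegR R v - indegR R v))))

/-- The adjacency relation of `H`. -/
def HRel {V : Type} (R : V → V → Prop) : HVert V R → HVert V R → Prop
  | .inl u, .inl v => R u v                               -- the arcs of D
  | .inl u, .inr (.inr (.inl s)) => u = s.1               -- v → (subdivision vertex of a v-to-x arc)
  | .inr (.inr (.inl _)), .inr (.inl b) => b = true       -- (subdivision vertex) → x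
  | .inr (.inl b), .inr (.inr (.inr _)) => b = true       -- x → (subdivision vertex of an x-to-v arc)
  | .inr (.inr (.inr s)), .inl v => s.1 = v               -- (subdivision vertex) → v
  | .inr (.inl b), .inr (.inl b') => (b = true ∧ b' = false) ∨ (b = false ∧ b' = true)
                                                          -- the arcs x → y and y → x
  | _, _ => False

/-!
Every vertex of `H` outside `D` is tied to `x`: the only out-neighbour of `y` and of a
subdivision vertex of an arc into `x` is `x`, and the only in-neighbour of a subdivision vertex
of an arc out of `x` is `x`. Hence a directed cycle of `H` avoiding `x` is a cycle of `D`, so in a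
family of disjoint cycles of `H` all but at most one (the one through `x`) come from `D`;
conversely the 2-cycle `xyx` is disjoint from any family of cycles of `D`.

At a vertex of `D` the added arcs exactly repair the imbalance, and at `x` balance is the
handshake identity `∑ d⁺ = ∑ d⁻` in the form `∑ (d⁻ - d⁺)⁺ = ∑ (d⁺ - d⁻)⁺`. Every vertex of `H`
is joined to `x`, the vertices of `D` through a vertex of `D` that is unbalanced.
-/

open Function

section Cycles

variable {α β : Type} {R : α → α → Prop} {S : β → β → Prop} {L : List (α × α)}

theorem IsCycleR.map_snd_eq_rotate (h : IsCycleR R L) :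
    L.map Prod.snd = (L.map Prod.fst).rotate 1 := by
  obtain ⟨hne, -, hchain, hclose, -⟩ := h
  refine List.ext_getElem (by simp) fun i hi _ => ?_
  have hi : i + 1 ≤ L.length := by simpa using hi
  simp only [List.getElem_map, List.getElem_rotate, List.length_map]
  rcases hi.lt_or_eq with hi | hi
  · simp only [Nat.mod_eq_of_lt hi]
    exact List.isChain_iff_getElem.1 hchain i hi
  · rw [List.getLast?_eq_some_getLast hne, List.head?_eq_some_head hne] at hclose
    simpa [hi, List.getLast_eq_getElem, List.head_eq_getElem, show L.length - 1 = i by omega]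
      using Option.some.inj hclose

theorem IsCycleR.mem_map_snd_iff (h : IsCycleR R L) {a : α} :
    a ∈ L.map Prod.snd ↔ a ∈ L.map Prod.fst := by
  rw [h.map_snd_eq_rotate, List.mem_rotate]

theorem isCycleR_map_iff {f : α → β} (hf : Injective f) (hS : ∀ a b, S (f a) (f b) ↔ R a b) :
    IsCycleR S (L.map (Prod.map f f)) ↔ IsCycleR R L := by
  refine and_congr (by simp) (and_congr ?_ (and_congr ?_ (and_congr ?_ ?_)))
  · simp only [List.forall_mem_map, Prod.map_fst, Prod.map_snd, hS]
  · refine (List.isChain_map _).trans ?_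
    simp only [Prod.map_fst, Prod.map_snd, hf.eq_iff]
    rfl
  · rw [List.getLast?_map, List.head?_map, Option.map_map, Option.map_map, Prod.map_fst',
      Prod.map_snd', ← Option.map_map, ← Option.map_map]
    exact (Option.map_injective hf).eq_iff
  · rw [List.map_map, Prod.map_fst', ← List.map_map, List.nodup_map_iff hf]

end Cycles

section Packings

variable {α β : Type} {R : α → α → Prop} {S : β → β → Prop} {k : ℕ} {C : Fin k → List (α × α)}

def IsCyclePacking (R : α → α → Prop) {k : ℕ} (C : Fin k → List (α × α)) : Prop :=
  (∀ i, IsCycleR R (C i)) ∧ ∀ i j, i ≠ j → ∀ v ∈ (C i).map Prod.fst, v ∉ (C j).map Prod.fst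

theorem IsCyclePacking.card_le [Finite α] (hC : IsCyclePacking R C) : k ≤ Nat.card α := by
  have hne i : C i ≠ [] := (hC.1 i).1
  let start i : α := ((C i).head (hne i)).1
  have hstart i : start i ∈ (C i).map Prod.fst := List.mem_map_of_mem (List.head_mem _)
  have hinj : Injective start := fun i j hij => by
    by_contra hij'
    exact hC.2 i j hij' _ (hstart i) (hij ▸ hstart j)
  simpa using Nat.card_le_card_of_injective start hinj

theorem bddAbove_setOf_isCyclePacking [Finite α] (R : α → α → Prop) :
    BddAbove {k | ∃ C : Fin k → List (α × α), IsCyclePacking R C} :=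
  ⟨Nat.card α, fun _ ⟨_, hC⟩ => hC.card_le⟩

theorem IsCyclePacking.le_nu0 [Finite α] (hC : IsCyclePacking R C) : k ≤ nu0 R :=
  le_csSup (bddAbove_setOf_isCyclePacking R) ⟨C, hC⟩

theorem exists_isCyclePacking_nu0 [Finite α] (R : α → α → Prop) :
    ∃ C : Fin (nu0 R) → List (α × α), IsCyclePacking R C :=
  Nat.sSup_mem (s := {k | ∃ C : Fin k → List (α × α), IsCyclePacking R C})
    ⟨0, finZeroElim, finZeroElim, finZeroElim⟩ (bddAbove_setOf_isCyclePacking R)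

theorem isCyclePacking_map_iff {f : α → β} (hf : Injective f)
    (hS : ∀ a b, S (f a) (f b) ↔ R a b) :
    IsCyclePacking S (fun i => (C i).map (Prod.map f f)) ↔ IsCyclePacking R C := by
  have hfst i : ((C i).map (Prod.map f f)).map Prod.fst = ((C i).map Prod.fst).map f := by
    rw [List.map_map, Prod.map_fst', ← List.map_map]
  simp only [IsCyclePacking, isCycleR_map_iff hf hS, hfst, List.forall_mem_map,
    List.mem_map_of_injective hf]

theorem IsCyclePacking.comp (hC : IsCyclePacking R C) {m : ℕ} {e : Fin m → Fin k}
    (he : Injective e) : IsCyclePacking R (C ∘ e) :=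
  ⟨fun i => hC.1 (e i), fun _ _ hij => hC.2 _ _ (he.ne hij)⟩

theorem IsCyclePacking.cons (hC : IsCyclePacking R C) {L : List (α × α)} (hL : IsCycleR R L)
    (hdisj : ∀ i, ∀ v ∈ L.map Prod.fst, v ∉ (C i).map Prod.fst) :
    IsCyclePacking R (Fin.cons L C : Fin (k + 1) → List (α × α)) := by
  refine ⟨Fin.cases hL hC.1, fun i j hij => ?_⟩
  cases i using Fin.cases <;> cases j using Fin.cases
  · exact absurd rfl hij
  · exact hdisj _
  · exact fun v hv hL => hdisj _ v hL hv
  · exact hC.2 _ _ (fun h => hij (congrArg _ h))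

theorem IsCyclePacking.exists_forall_notMem (hC : IsCyclePacking R C) (a : α) :
    ∃ m, k ≤ m + 1 ∧ ∃ C' : Fin m → List (α × α), IsCyclePacking R C' ∧
      ∀ i, a ∉ (C' i).map Prod.fst := by
  by_cases ha : ∃ i, a ∈ (C i).map Prod.fst
  · obtain ⟨i₀, hi₀⟩ := ha
    obtain ⟨m, rfl⟩ : ∃ m, k = m + 1 := Nat.exists_eq_add_one.2 i₀.pos
    exact ⟨m, le_rfl, C ∘ i₀.succAbove, hC.comp Fin.succAbove_right_injective,
      fun i hi => hC.2 _ _ (Fin.succAbove_ne i₀ i) a hi hi₀⟩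
  · exact ⟨k, by omega, C, hC, not_exists.1 ha⟩

end Packings

section Degrees

variable {α : Type} [Fintype α] (R : α → α → Prop)

theorem sum_outdegR_eq_card : ∑ v, outdegR R v = Nat.card {p : α × α // R p.1 p.2} := by
  rw [Nat.card_congr (Equiv.subtypeProdEquivSigmaSubtype R), Nat.card_sigma]
  rfl

theorem sum_outdegR_eq_sum_indegR : ∑ v, outdegR R v = ∑ v, indegR R v := by
  change _ = ∑ v, outdegR (flip R) v
  rw [sum_outdegR_eq_card, sum_outdegR_eq_card]
  exact Nat.card_congr ((Equiv.prodComm α α).subtypeEquiv fun _ => Iff.rfl)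

end Degrees

theorem Finset.sum_tsub_eq_sum_tsub_of_sum_eq {ι : Type} {s : Finset ι} {a b : ι → ℕ}
    (h : ∑ i ∈ s, a i = ∑ i ∈ s, b i) : ∑ i ∈ s, (a i - b i) = ∑ i ∈ s, (b i - a i) := by
  have ha : ∑ i ∈ s, (a i - b i) + ∑ i ∈ s, min (a i) (b i) = ∑ i ∈ s, a i := by
    rw [← Finset.sum_add_distrib]
    exact Finset.sum_congr rfl fun i _ => by omega
  have hb : ∑ i ∈ s, (b i - a i) + ∑ i ∈ s, min (a i) (b i) = ∑ i ∈ s, b i := by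
    rw [← Finset.sum_add_distrib]
    exact Finset.sum_congr rfl fun i _ => by omega
  omega

theorem Nat.card_subtype_sum {α β : Type} [Finite α] [Finite β] (p : α ⊕ β → Prop) :
    Nat.card {c // p c} = Nat.card {a // p (.inl a)} + Nat.card {b // p (.inr b)} := by
  rw [Nat.card_congr Equiv.subtypeSum, Nat.card_sum]

theorem SimpleGraph.Reachable.map_fromRel {α β : Type} {R : α → α → Prop} {S : β → β → Prop}
    {f : α → β} (hf : Injective f) (hRS : ∀ a b, R a b → S (f a) (f b)) {a b : α}
    (h : (fromRel R).Reachable a b) : (fromRel S).Reachable (f a) (f b) :=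
  h.map ⟨f, fun hab => by
    rw [fromRel_adj] at hab ⊢
    exact ⟨hf.ne hab.1, hab.2.imp (hRS _ _) (hRS _ _)⟩⟩

namespace HVert

variable {V : Type} {R : V → V → Prop}

instance [Finite V] : Finite (HVert V R) := by unfold HVert; infer_instance

abbrev ofV (v : V) : HVert V R := Sum.inl v

abbrev x : HVert V R := Sum.inr (Sum.inl true)

abbrev y : HVert V R := Sum.inr (Sum.inl false)

abbrev subToX (s : Σ v : V, Fin (indegR R v - outdegR R v)) : HVert V R :=
  Sum.inr (Sum.inr (Sum.inl s))

abbrev subFromX (s : Σ v : V, Fin (outdegR R v - indegR R v)) : HVert V R :=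
  Sum.inr (Sum.inr (Sum.inr s))

@[elab_as_elim]
theorem cases {motive : HVert V R → Prop} (ofV : ∀ v, motive (ofV v)) (x : motive x)
    (y : motive y) (subToX : ∀ s, motive (subToX s)) (subFromX : ∀ s, motive (subFromX s))
    (w : HVert V R) : motive w := by
  unfold HVert at w
  rcases w with v | (_ | _) | s | s
  exacts [ofV v, y, x, subToX s, subFromX s]

end HVert

section H

variable {V : Type} {R : V → V → Prop}

open HVert

theorem indegR_HRel_eq_outdegR [Fintype V] (w : HVert V R) :
    indegR (HRel R) w = outdegR (HRel R) w := by
  have hfiber {f : V → ℕ} (v : V) : Nat.card {s : Σ u, Fin (f u) // s.1 = v} = f v := by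
    rw [Nat.card_congr (Equiv.sigmaSubtype v), Nat.card_eq_fintype_card, Fintype.card_fin]
  induction w using HVert.cases <;>
    simp only [indegR, outdegR, HVert, Nat.card_subtype_sum, HRel]
  case ofV v =>
    simp only [Nat.card_eq_fintype_card, Fintype.card_eq_zero, hfiber, zero_add, eq_comm (a := v),
      add_zero]
    omega
  case x =>
    simp only [Nat.card_eq_fintype_card, Fintype.card_eq_zero, Bool.true_eq_false, and_false,
      and_true, false_or, Fintype.card_unique, Fintype.card_subtype_true, Fintype.card_sigma,
      Fintype.card_fin, add_zero, zero_add, true_and, false_and, or_false, Nat.add_left_cancel_iff]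
    exact Finset.sum_tsub_eq_sum_tsub_of_sum_eq (sum_outdegR_eq_sum_indegR R).symm
  all_goals simp

theorem connected_fromRel_HRel (hconn : (SimpleGraph.fromRel R).Connected)
    (himb : ∃ v, outdegR R v ≠ indegR R v) : (SimpleGraph.fromRel (HRel R)).Connected := by
  obtain ⟨v₀, hv₀⟩ := himb
  have adj (a b : HVert V R) (hab : HRel R a b) (hne : a ≠ b) :
      (SimpleGraph.fromRel (HRel R)).Adj a b :=
    (SimpleGraph.fromRel_adj _ _ _).2 ⟨hne, .inl hab⟩
  have hv₀ : (SimpleGraph.fromRel (HRel R)).Reachable (ofV v₀) x := by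
    rcases lt_or_gt_of_ne hv₀ with h | h
    · obtain ⟨i⟩ : Nonempty (Fin (indegR R v₀ - outdegR R v₀)) := ⟨⟨0, by omega⟩⟩
      exact (adj (ofV v₀) (subToX ⟨v₀, i⟩) rfl nofun).reachable.trans
        (adj (subToX ⟨v₀, i⟩) x rfl nofun).reachable
    · obtain ⟨i⟩ : Nonempty (Fin (outdegR R v₀ - indegR R v₀)) := ⟨⟨0, by omega⟩⟩
      exact ((adj x (subFromX ⟨v₀, i⟩) rfl nofun).reachable.trans
        (adj (subFromX ⟨v₀, i⟩) (ofV v₀) rfl nofun).reachable).symm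
  have hreach (w : HVert V R) : (SimpleGraph.fromRel (HRel R)).Reachable w x := by
    induction w using HVert.cases with
    | ofV v =>
      exact ((hconn.preconnected v v₀).map_fromRel Sum.inl_injective fun _ _ h => h).trans hv₀
    | x => rfl
    | y => exact (adj y x (.inr ⟨rfl, rfl⟩) nofun).reachable
    | subToX s => exact (adj (subToX s) x rfl nofun).reachable
    | subFromX s => exact (adj x (subFromX s) rfl nofun).reachable.symm
  exact (SimpleGraph.connected_iff_exists_forall_reachable _).2 ⟨x, fun w => (hreach w).symm⟩

theorem HRel.x_mem_of_isCycleR {L : List (HVert V R × HVert V R)} (hL : IsCycleR (HRel R) L)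
    {w : HVert V R} (hw : w ∈ L.map Prod.fst) (hwV : w ∉ Set.range ofV) :
    x ∈ L.map Prod.fst := by
  obtain ⟨⟨w, u⟩, hp, rfl⟩ := List.mem_map.1 hw
  have harc : HRel R w u := hL.2.1 _ hp
  have hu : u ∈ L.map Prod.fst := hL.mem_map_snd_iff.1 (List.mem_map_of_mem hp)
  obtain ⟨⟨t, w'⟩, hq, hw' : w' = w⟩ := List.mem_map.1 (hL.mem_map_snd_iff.2 hw)
  have harc' : HRel R t w := hw' ▸ hL.2.1 _ hq
  have ht : t ∈ L.map Prod.fst := List.mem_map_of_mem hq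
  induction w using HVert.cases with
  | ofV v => exact absurd ⟨v, rfl⟩ hwV
  | x => exact hw
  | y =>
    obtain rfl : u = x := by induction u using HVert.cases <;> simp_all [HRel]
    exact hu
  | subToX s =>
    obtain rfl : u = x := by induction u using HVert.cases <;> simp_all [HRel]
    exact hu
  | subFromX s =>
    obtain rfl : t = x := by induction t using HVert.cases <;> simp_all [HRel]
    exact ht

theorem HRel.exists_map_ofV_eq_of_isCycleR {L : List (HVert V R × HVert V R)}
    (hL : IsCycleR (HRel R) L) (hx : x ∉ L.map Prod.fst) :
    ∃ L' : List (V × V), L'.map (Prod.map ofV ofV) = L := by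
  have hV w (hw : w ∈ L.map Prod.fst) : w ∈ Set.range (ofV (R := R)) :=
    by_contra fun h => hx (HRel.x_mem_of_isCycleR hL hw h)
  rw [← Set.mem_range, Set.range_list_map, Set.range_prodMap]
  rintro ⟨a, b⟩ hp
  exact ⟨hV a (List.mem_map_of_mem hp), hV b (hL.mem_map_snd_iff.1 (List.mem_map_of_mem hp))⟩

theorem isCycleR_HRel_xy : IsCycleR (HRel R) [(x, y), (y, x)] :=
  ⟨by simp, by simp [HRel], .cons_cons rfl (.singleton _), rfl, by simp; nofun⟩

theorem isCyclePacking_map_ofV_iff {k : ℕ} {C : Fin k → List (V × V)} :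
    IsCyclePacking (HRel R) (fun i => (C i).map (Prod.map ofV ofV)) ↔ IsCyclePacking R C :=
  isCyclePacking_map_iff Sum.inl_injective fun _ _ => Iff.rfl

variable [Fintype V]

theorem nu0_add_one_le_nu0_HRel : nu0 R + 1 ≤ nu0 (HRel R) := by
  obtain ⟨C, hC⟩ := exists_isCyclePacking_nu0 R
  refine (isCyclePacking_map_ofV_iff.2 hC |>.cons isCycleR_HRel_xy fun i v hv hvC => ?_).le_nu0
  rw [List.map_map] at hvC
  obtain ⟨p, -, rfl⟩ := List.mem_map.1 hvC
  simp at hv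

theorem nu0_HRel_le_nu0_add_one : nu0 (HRel R) ≤ nu0 R + 1 := by
  obtain ⟨C, hC⟩ := exists_isCyclePacking_nu0 (HRel R)
  obtain ⟨m, hm, C', hC', hx⟩ := hC.exists_forall_notMem x
  choose D hD using fun i => HRel.exists_map_ofV_eq_of_isCycleR (hC'.1 i) (hx i)
  have hD : IsCyclePacking R D := isCyclePacking_map_ofV_iff.1 (by simpa only [hD] using hC')
  have := hD.le_nu0
  omega

end H

theorem stmt13_general {V : Type} [Fintype V] (R : V → V → Prop)
    (hconn : (SimpleGraph.fromRel R).Connected)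
    (himb : ∃ v, outdegR R v ≠ indegR R v) :
    ((SimpleGraph.fromRel (HRel R)).Connected ∧
      ∀ w : HVert V R, indegR (HRel R) w = outdegR (HRel R) w) ∧
    nu0 (HRel R) = nu0 R + 1 :=
  ⟨⟨connected_fromRel_HRel hconn himb, indegR_HRel_eq_outdegR⟩,
    nu0_HRel_le_nu0_add_one.antisymm nu0_add_one_le_nu0_HRel⟩

theorem stmt13 {V : Type} [Fintype V] [DecidableEq V] (R : V → V → Prop)
    (hloop : ∀ v, ¬ R v v)
    (hconn : (SimpleGraph.fromRel R).Connected)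
    (himb : ∃ v, outdegR R v ≠ indegR R v) :
    ((SimpleGraph.fromRel (HRel R)).Connected ∧
      ∀ w : HVert V R, indegR (HRel R) w = outdegR (HRel R) w) ∧
    nu0 (HRel R) = nu0 R + 1 :=
  stmt13_general R hconn himb
end
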